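/- Let s be as in the context (any of the four cases). Let 2 ≤ k ≤ D+1 and κ ∈ Δ̄_K^k. Then: (ii) if κ ∈ Δ^C ∪ Δ^R then P_κ = ∅; and (iii) if κ ∈ (Δ̄_K)₊ \ Δ₃^O then P′_κ = ∅. -/

import Mathlib

/- Common framework: type A_l root system realized in ℝ^{ℕ} (coordinates 1,…,l+1 used),
   the Weyl group as permutations of ℕ acting by permuting coordinates, and the
   Weyl group element s = s₁s₂ of Proposition 4.2 (all four parity cases). -/

noncomputable section

namespace DPW

/-- The ambient vector space (only coordinates 1,…,l+1 are used). -/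
abbrev V : Type := ℕ → ℝ

/-- Standard basis vector e_i. -/
def evec (i : ℕ) : V := fun j => if j = i then 1 else 0

/-- The root e_i − e_j. -/
def rt (i j : ℕ) : V := evec i - evec j

/-- The root system Δ of type A_l. -/
def Delta (l : ℕ) : Set V :=
  {v | ∃ i j, 1 ≤ i ∧ i ≤ l + 1 ∧ 1 ≤ j ∧ j ≤ l + 1 ∧ i ≠ j ∧ v = rt i j}

/-- Positive roots Δ₊. -/
def DeltaPos (l : ℕ) : Set V :=
  {v | ∃ i j, 1 ≤ i ∧ i < j ∧ j ≤ l + 1 ∧ v = rt i j}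

/-- Negative roots Δ₋ = −Δ₊. -/
def DeltaNeg (l : ℕ) : Set V := {v | -v ∈ DeltaPos l}

/-- Action of a permutation on V : (σ·v)_j = v_{σ⁻¹(j)}. -/
def pact (σ : Equiv.Perm ℕ) (v : V) : V := fun j => v (σ⁻¹ j)

/-- row(e_a − e_b) = a. -/
def rowOf (v : V) : ℕ := sInf {a | v a = 1}

/-- col(e_a − e_b) = b. -/
def colOf (v : V) : ℕ := sInf {b | v b = (-1 : ℝ)}

/-- Product of the simple reflections s_{α_i} = (i, i+1) for i in a list. -/
def swapProd (idxs : List ℕ) : Equiv.Perm ℕ :=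
  (idxs.map (fun i => Equiv.swap i (i + 1))).prod

/-- The Weyl group element s = s₁s₂ (cases (i)–(iv) according to the parities of
    m = ⌊(l′−1)/2⌋ and l′; here p = l − l′ and s_γ = (m+1, m+p+2)). -/
def weylS (l l' : ℕ) : Equiv.Perm ℕ :=
  let m := (l' - 1) / 2
  let p := l - l'
  if m % 2 = 0 then
    if l' % 2 = 1 then
      -- case (i)
      (swapProd (List.range' 2 (m / 2) 2) * swapProd (List.range' (m + p + 2) (m / 2) 2)) *
        (swapProd (List.range' 1 (m / 2) 2) * Equiv.swap (m + 1) (m + p + 2) *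
          swapProd (List.range' (m + p + 3) (m / 2) 2))
    else
      -- case (ii)
      (swapProd (List.range' 2 (m / 2) 2) * swapProd (List.range' (m + p + 2) (m / 2 + 1) 2)) *
        (swapProd (List.range' 1 (m / 2) 2) * Equiv.swap (m + 1) (m + p + 2) *
          swapProd (List.range' (m + p + 3) (m / 2) 2))
  else
    if l' % 2 = 1 then
      -- case (iii)
      (swapProd (List.range' 1 ((m + 1) / 2) 2) *
          swapProd (List.range' (m + p + 2) ((m + 1) / 2) 2)) *
        (swapProd (List.range' 2 ((m - 1) / 2) 2) * Equiv.swap (m + 1) (m + p + 2) *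
          swapProd (List.range' (m + p + 3) ((m - 1) / 2) 2))
    else
      -- case (iv)
      (swapProd (List.range' 1 ((m + 1) / 2) 2) *
          swapProd (List.range' (m + p + 2) ((m + 1) / 2) 2)) *
        (swapProd (List.range' 2 ((m - 1) / 2) 2) * Equiv.swap (m + 1) (m + p + 2) *
          swapProd (List.range' (m + p + 3) ((m + 1) / 2) 2))

/-- Δ_s = {α ∈ Δ₊ : sα ∈ Δ₋}. -/
def DeltaS (l : ℕ) (s : Equiv.Perm ℕ) : Set V :=
  {v ∈ DeltaPos l | pact s v ∈ DeltaNeg l}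

/-- Δ_{s⁻¹} = {α ∈ Δ₊ : s⁻¹α ∈ Δ₋}. -/
def DeltaSinv (l : ℕ) (s : Equiv.Perm ℕ) : Set V :=
  {v ∈ DeltaPos l | pact s⁻¹ v ∈ DeltaNeg l}

/-- (Δ̄_K)₊ = {α ∈ Δ₊ : sα ≠ α}. -/
def DeltaKpos (l : ℕ) (s : Equiv.Perm ℕ) : Set V :=
  {v ∈ DeltaPos l | pact s v ≠ v}

/-- (Δ̄_K)₋ = −(Δ̄_K)₊. -/
def DeltaKneg (l : ℕ) (s : Equiv.Perm ℕ) : Set V := {v | -v ∈ DeltaKpos l s}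

/-- Δ^C = {α ∈ (Δ̄_K)₊ : row(sα) = row(α)}. -/
def DeltaC (l : ℕ) (s : Equiv.Perm ℕ) : Set V :=
  {v ∈ DeltaKpos l s | rowOf (pact s v) = rowOf v}

/-- Δ^R = {α ∈ (Δ̄_K)₊ : col(sα) = col(α)}. -/
def DeltaR (l : ℕ) (s : Equiv.Perm ℕ) : Set V :=
  {v ∈ DeltaKpos l s | colOf (pact s v) = colOf v}

/-- Δ^O = (Δ̄_K)₊ \ (Δ^C ∪ Δ^R). -/
def DeltaO (l : ℕ) (s : Equiv.Perm ℕ) : Set V :=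
  DeltaKpos l s \ (DeltaC l s ∪ DeltaR l s)

/-- Δ₁^O = {α ∈ Δ^O : row(α) ≥ m+p+2}. -/
def DeltaO1 (l : ℕ) (s : Equiv.Perm ℕ) (m p : ℕ) : Set V :=
  {v ∈ DeltaO l s | m + p + 2 ≤ rowOf v}

/-- Δ₂^O = {α ∈ Δ^O : col(α) ≤ m+1}. -/
def DeltaO2 (l : ℕ) (s : Equiv.Perm ℕ) (m : ℕ) : Set V :=
  {v ∈ DeltaO l s | colOf v ≤ m + 1}

/-- Δ₃^O = Δ^O \ (Δ₁^O ∪ Δ₂^O). -/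
def DeltaO3 (l : ℕ) (s : Equiv.Perm ℕ) (m p : ℕ) : Set V :=
  DeltaO l s \ (DeltaO1 l s m p ∪ DeltaO2 l s m)

/-- Δ̄_K^k = {α ∈ (Δ̄_K)₊ : s^{−j}α ∈ (Δ̄_K)₊ for 1 ≤ j ≤ k−1 and s^{−k}α ∈ (Δ̄_K)₋}. -/
def DeltaKk (l : ℕ) (s : Equiv.Perm ℕ) (k : ℕ) : Set V :=
  {v ∈ DeltaKpos l s |
    (∀ j, 1 ≤ j → j ≤ k - 1 → pact (s⁻¹ ^ j) v ∈ DeltaKpos l s) ∧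
      pact (s⁻¹ ^ k) v ∈ DeltaKneg l s}

/-- d(α) = min{k ≥ 1 : s^{−k}α ∈ Δ₋}. -/
def dd (l : ℕ) (s : Equiv.Perm ℕ) (v : V) : ℕ :=
  sInf {k | 1 ≤ k ∧ pact (s⁻¹ ^ k) v ∈ DeltaNeg l}

/-- Δ_Z = {e_i − e_j : m+2 ≤ i, j ≤ m+p+1, i ≠ j}. -/
def DeltaZ (m p : ℕ) : Set V :=
  {v | ∃ i j, m + 2 ≤ i ∧ i ≤ m + p + 1 ∧ m + 2 ≤ j ∧ j ≤ m + p + 1 ∧ i ≠ j ∧ v = rt i j}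

/-- The ⟨s⟩-orbit of a vector. -/
def orbitOf (s : Equiv.Perm ℕ) (v : V) : Set V := {w | ∃ n : ℤ, w = pact (s ^ n) v}

/-- The set P_κ (for κ ∈ Δ̄_K^k). -/
def Pk (l : ℕ) (s : Equiv.Perm ℕ) (k : ℕ) (κ : V) : Set (V × V) :=
  {q | (∃ i, 2 ≤ i ∧ i ≤ k - 1 ∧ q.1 ∈ DeltaKk l s i) ∧ q.2 ∈ DeltaKk l s k ∧ κ = q.1 + q.2}

/-- The set P′_κ (for κ ∈ Δ̄_K^k). -/
def Pk' (l : ℕ) (s : Equiv.Perm ℕ) (k : ℕ) (κ : V) : Set (V × V) :=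
  {q | q.1 ∈ DeltaKk l s k ∧ q.2 ∈ DeltaKk l s k ∧ κ = q.1 + q.2}

/-- The eigenvector v^λ of case (i) (m even, l′ = 2m+1 odd). -/
def vlam (m p : ℕ) (lam : ℂ) : ℕ → ℂ := fun j =>
  if j = 0 then 0
  else if j ≤ m + 1 then
    (if j % 2 = 1 then lam ^ ((4 * m + 5 - j) / 2) else lam ^ (j / 2))
  else if j ≤ m + p + 1 then 0
  else if j ≤ m + p + m + 2 then
    (if (j - (m + p)) % 2 = 0 then lam ^ ((m + (j - (m + p))) / 2)
     else lam ^ ((3 * m + 5 - (j - (m + p))) / 2))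
  else 0


/- ===================== Auxiliary lemmas ===================== -/

lemma rt_apply (i j x : ℕ) : rt i j x = (if x = i then (1:ℝ) else 0) - (if x = j then 1 else 0) := rfl

lemma rt_eq_iff {i j i' j' : ℕ} (hij : i ≠ j) (hij' : i' ≠ j') :
    rt i j = rt i' j' ↔ i = i' ∧ j = j' := by
  constructor
  · intro h
    have h1 := congrFun h i
    have h2 := congrFun h j
    rw [rt_apply, rt_apply, if_pos rfl, if_neg hij] at h1
    rw [rt_apply, rt_apply, if_neg (Ne.symm hij), if_pos rfl] at h2
    constructor
    · by_contra hne
      rw [if_neg hne] at h1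
      split_ifs at h1 <;> norm_num at h1
    · by_contra hne
      rw [if_neg hne] at h2
      split_ifs at h2 <;> norm_num at h2
  · rintro ⟨rfl, rfl⟩; rfl

lemma neg_rt (i j : ℕ) : -(rt i j) = rt j i := by
  funext x; simp only [Pi.neg_apply, rt_apply]; ring

lemma rt_ne_zero {i j : ℕ} (h : i ≠ j) : rt i j ≠ 0 := by
  intro hc
  have := congrFun hc i
  rw [rt_apply, if_pos rfl, if_neg h] at this
  norm_num at this

lemma mem_DeltaPos {l x y : ℕ} : rt x y ∈ DeltaPos l ↔ (1 ≤ x ∧ x < y ∧ y ≤ l + 1) := by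
  constructor
  · rintro ⟨i, j, h1, hij, hj, hv⟩
    by_cases hxy : x = y
    · exfalso
      refine rt_ne_zero (show i ≠ j by omega) ?_
      rw [← hv, hxy, rt]; exact sub_self _
    · obtain ⟨rfl, rfl⟩ := (rt_eq_iff hxy (by omega)).mp hv
      omega
  · intro h; exact ⟨x, y, h.1, h.2.1, h.2.2, rfl⟩

lemma mem_DeltaNeg {l x y : ℕ} : rt x y ∈ DeltaNeg l ↔ (1 ≤ y ∧ y < x ∧ x ≤ l + 1) := by
  show -(rt x y) ∈ DeltaPos l ↔ _
  rw [neg_rt, mem_DeltaPos]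

lemma pact_rt (σ : Equiv.Perm ℕ) (i j : ℕ) : pact σ (rt i j) = rt (σ i) (σ j) := by
  funext x
  simp only [pact, rt_apply]
  congr 1 <;> [skip; skip] <;>
  · congr 1
    simp only [eq_iff_iff]
    constructor
    · intro h; rw [← h]; simp
    · intro h; rw [h]; simp

lemma pact_eq_self_iff (σ : Equiv.Perm ℕ) {i j : ℕ} (hij : i ≠ j) :
    pact σ (rt i j) = rt i j ↔ (σ i = i ∧ σ j = j) := by
  rw [pact_rt, rt_eq_iff (by simp [hij]) hij]

lemma mem_DeltaKpos {l : ℕ} {s : Equiv.Perm ℕ} {x y : ℕ} :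
    rt x y ∈ DeltaKpos l s ↔ (1 ≤ x ∧ x < y ∧ y ≤ l + 1 ∧ ¬(s x = x ∧ s y = y)) := by
  constructor
  · rintro ⟨hpos, hne⟩
    obtain ⟨h1, h2, h3⟩ := mem_DeltaPos.mp hpos
    refine ⟨h1, h2, h3, fun hc => hne ?_⟩
    exact (pact_eq_self_iff s (by omega)).mpr hc
  · rintro ⟨h1, h2, h3, h4⟩
    exact ⟨mem_DeltaPos.mpr ⟨h1, h2, h3⟩, fun hc => h4 ((pact_eq_self_iff s (by omega)).mp hc)⟩

lemma mem_DeltaKneg {l : ℕ} {s : Equiv.Perm ℕ} {x y : ℕ} :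
    rt x y ∈ DeltaKneg l s ↔ (1 ≤ y ∧ y < x ∧ x ≤ l + 1 ∧ ¬(s x = x ∧ s y = y)) := by
  show -(rt x y) ∈ DeltaKpos l s ↔ _
  rw [neg_rt, mem_DeltaKpos]
  tauto

lemma rowOf_rt {i j : ℕ} (h : i ≠ j) : rowOf (rt i j) = i := by
  have : {a | rt i j a = 1} = {i} := by
    ext x
    simp only [Set.mem_setOf_eq, Set.mem_singleton_iff, rt_apply]
    constructor
    · intro hx; by_contra hne
      rw [if_neg hne] at hx
      split_ifs at hx <;> norm_num at hx
    · intro hx; subst hx; rw [if_pos rfl, if_neg h]; norm_num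
  rw [rowOf, this, csInf_singleton]

lemma colOf_rt {i j : ℕ} (h : i ≠ j) : colOf (rt i j) = j := by
  have : {b | rt i j b = (-1:ℝ)} = {j} := by
    ext x
    simp only [Set.mem_setOf_eq, Set.mem_singleton_iff, rt_apply]
    constructor
    · intro hx; by_contra hne
      rw [if_neg hne] at hx
      split_ifs at hx <;> norm_num at hx
    · intro hx; subst hx; rw [if_pos rfl, if_neg (Ne.symm h)]; norm_num
  rw [colOf, this, csInf_singleton]

lemma root_sum_split {a b x y u v : ℕ} (hab : a < b) (hxy : x < y) (huv : u < v)
    (h : rt a b = rt x y + rt u v) :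
    (x = a ∧ y = u ∧ v = b) ∨ (u = a ∧ v = x ∧ y = b) := by
  have key : a = x ∨ a = u := by
    by_contra hc
    push_neg at hc
    have h1 := congrFun h a
    rw [rt_apply, if_pos rfl, if_neg (by omega : a ≠ b)] at h1
    simp only [Pi.add_apply, rt_apply, if_neg hc.1, if_neg hc.2] at h1
    split_ifs at h1 <;> norm_num at h1
  rcases key with rfl | rfl
  · left
    have huv' : rt u v = rt y b := by
      have : rt u v = rt a b - rt a y := by rw [h]; abel
      rw [this]; funext w; simp only [Pi.sub_apply, rt_apply]; ring
    have hyb : y ≠ b := by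
      intro hc; subst hc
      exact rt_ne_zero (by omega : u ≠ v) (by simpa [rt, sub_self] using huv')
    obtain ⟨rfl, rfl⟩ := (rt_eq_iff (by omega) hyb).mp huv'
    exact ⟨rfl, rfl, rfl⟩
  · right
    have hxy' : rt x y = rt v b := by
      have : rt x y = rt a b - rt a v := by rw [h]; abel
      rw [this]; funext w; simp only [Pi.sub_apply, rt_apply]; ring
    have hvb : v ≠ b := by
      intro hc; subst hc
      exact rt_ne_zero (by omega : x ≠ y) (by simpa [rt, sub_self] using hxy')
    obtain ⟨rfl, rfl⟩ := (rt_eq_iff (by omega) hvb).mp hxy'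
    exact ⟨rfl, rfl, rfl⟩

lemma swapProd_apply (n a x : ℕ) : swapProd (List.range' a n 2) x =
    if a ≤ x ∧ x < a + 2*n then (if (x - a) % 2 = 0 then x + 1 else x - 1) else x := by
  induction n generalizing a with
  | zero => simp only [List.range'_zero, swapProd, List.map_nil, List.prod_nil,
      Equiv.Perm.one_apply]; split_ifs <;> omega
  | succ n ih =>
    rw [List.range'_succ]
    have e : swapProd (a :: List.range' (a+2) n 2)
        = Equiv.swap a (a+1) * swapProd (List.range' (a+2) n 2) := by
      simp [swapProd]
    rw [e, Equiv.Perm.mul_apply, ih]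
    simp only [Equiv.swap_apply_def]
    split_ifs <;> omega
/- ===================== The cycle structure ===================== -/

lemma fix_pow {s : Equiv.Perm ℕ} {x : ℕ} (hx : s x = x) (j : ℕ) :
    ((s⁻¹ : Equiv.Perm ℕ) ^ j) x = x := by
  induction j with
  | zero => rfl
  | succ j ih =>
    rw [pow_succ, Equiv.Perm.mul_apply, show s⁻¹ x = x from Equiv.Perm.inv_eq_iff_eq.mpr hx.symm, ih]

lemma DKk_elim {l k : ℕ} {s : Equiv.Perm ℕ} {x y : ℕ} (hk : 1 ≤ k)
    (hq : rt x y ∈ DeltaKk l s k) :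
    (∀ j, j ≤ k - 1 → (((s⁻¹ : Equiv.Perm ℕ) ^ j) x < ((s⁻¹ : Equiv.Perm ℕ) ^ j) y ∧
        1 ≤ ((s⁻¹ : Equiv.Perm ℕ) ^ j) x ∧ ((s⁻¹ : Equiv.Perm ℕ) ^ j) y ≤ l + 1)) ∧
    (((s⁻¹ : Equiv.Perm ℕ) ^ k) y < ((s⁻¹ : Equiv.Perm ℕ) ^ k) x ∧
        1 ≤ ((s⁻¹ : Equiv.Perm ℕ) ^ k) y ∧ ((s⁻¹ : Equiv.Perm ℕ) ^ k) x ≤ l + 1) ∧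
    ¬(s x = x ∧ s y = y) ∧ x < y ∧ 1 ≤ x ∧ y ≤ l + 1 := by
  obtain ⟨hpos, hmid, hneg⟩ := hq
  obtain ⟨hx1, hxy, hyl, hmov⟩ := mem_DeltaKpos.mp hpos
  refine ⟨?_, ?_, hmov, hxy, hx1, hyl⟩
  · intro j hj
    rcases Nat.eq_zero_or_pos j with rfl | hj1
    · simpa using ⟨hxy, hx1, hyl⟩
    · have h := hmid j hj1 hj
      rw [pact_rt] at h
      obtain ⟨c1, c2, c3, _⟩ := mem_DeltaKpos.mp h
      exact ⟨c2, c1, c3⟩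
  · rw [pact_rt] at hneg
    obtain ⟨c1, c2, c3, _⟩ := mem_DeltaKneg.mp hneg
    exact ⟨c2, c1, c3⟩

structure Cyc (l m p : ℕ) (s : Equiv.Perm ℕ) where
  N : ℕ
  M : ℕ
  lo : ℕ
  hi : ℕ
  val : ℕ → ℕ
  hm2 : 2 ≤ m
  hNp : N + p = l + 1
  hN1 : 2 * m + 2 ≤ N
  hN2 : N ≤ 2 * m + 3
  h1lo : 1 ≤ lo
  hloM : lo < M
  hMhi : M + 1 < hi
  hhiN : hi < N
  hLsize : lo + 1 + (N - hi) = m + 1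
  hper : ∀ t, val (t + N) = val t
  hs : ∀ t, s (val t) = val (t + 1)
  hup : ∀ t₁ t₂, t₁ < t₂ → t₂ ≤ M → val t₁ < val t₂
  hdown : ∀ t₁ t₂, M ≤ t₁ → t₁ < t₂ → t₂ ≤ N → val t₂ < val t₁
  hL : ∀ t, t < N → (val t ≤ m + 1 ↔ (t ≤ lo ∨ hi ≤ t))
  hrange : ∀ t, t < N → 1 ≤ val t ∧ val t ≤ l + 1 ∧ ¬(m + 2 ≤ val t ∧ val t ≤ m + p + 1)
  hsurj : ∀ x, 1 ≤ x → x ≤ l + 1 → ¬(m + 2 ≤ x ∧ x ≤ m + p + 1) → ∃ t, t < N ∧ val t = x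
  hfix : ∀ x, (x = 0 ∨ (m + 2 ≤ x ∧ x ≤ m + p + 1) ∨ l + 2 ≤ x) → s x = x
  hLmax : val lo = m + 1
  hRmin : val (hi - 1) = m + p + 2

namespace Cyc

variable {l m p : ℕ} {s : Equiv.Perm ℕ} (C : Cyc l m p s)

def bst (u : ℕ) : ℕ := if u = 0 then C.N - 1 else u - 1

lemma Npos : 0 < C.N := by have := C.hhiN; omega

lemma bst_lt {u : ℕ} (_ : u < C.N) : C.bst u < C.N := by
  have := C.Npos; unfold bst; split_ifs <;> omega

lemma sinv_val {u : ℕ} (_ : u < C.N) : s⁻¹ (C.val u) = C.val (C.bst u) := by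
  have h1 : s (C.val (C.bst u)) = C.val u := by
    by_cases h : u = 0
    · subst h
      rw [bst, if_pos rfl, C.hs]
      have e : C.N - 1 + 1 = 0 + C.N := by have := C.Npos; omega
      rw [e, C.hper]
    · rw [bst, if_neg h, C.hs]
      congr 1
      omega
  rw [← h1, Equiv.Perm.inv_def, Equiv.symm_apply_apply]

lemma sinv_pow_val (j : ℕ) : ∀ {u : ℕ}, u < C.N →
    ((s⁻¹ : Equiv.Perm ℕ) ^ j) (C.val u) = C.val (C.bst^[j] u) ∧ C.bst^[j] u < C.N := by
  induction j with
  | zero => intro u hu; simpa using hu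
  | succ j ih =>
    intro u hu
    rw [pow_succ, Equiv.Perm.mul_apply, C.sinv_val hu, Function.iterate_succ_apply]
    exact ih (C.bst_lt hu)

lemma iter_bst_le {u : ℕ} (hu : u < C.N) : ∀ {j : ℕ}, j ≤ u → C.bst^[j] u = u - j := by
  intro j
  induction j with
  | zero => simp
  | succ j ih =>
    intro h
    rw [Function.iterate_succ_apply', ih (by omega), bst, if_neg (by omega)]
    omega

lemma iter_bst_wrap {u j : ℕ} (hu : u < C.N) (h1 : u < j) (h2 : j ≤ u + C.N) :
    C.bst^[j] u = u + C.N - j := by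
  have e0 : C.bst^[u] u = 0 := by rw [C.iter_bst_le hu le_rfl]; omega
  have e1 : C.bst^[u + 1] u = C.N - 1 := by
    rw [Function.iterate_succ_apply', e0, bst, if_pos rfl]
  have e2 : j = (j - (u + 1)) + (u + 1) := by omega
  rw [e2, Function.iterate_add_apply, e1, C.iter_bst_le (by have := C.Npos; omega) (by omega)]
  have := C.Npos
  omega

lemma val_injOn {t1 t2 : ℕ} (h1 : t1 < C.N) (h2 : t2 < C.N) (h : C.val t1 = C.val t2) :
    t1 = t2 := by
  classical
  have hNp := C.hNp; have hN1 := C.hN1; have hm2 := C.hm2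
  set A : Finset ℕ := Finset.Icc 1 (m + 1) ∪ Finset.Icc (m + p + 2) (l + 1) with hA
  have hsub2 : A ⊆ (Finset.range C.N).image C.val := by
    intro x hx
    simp only [hA, Finset.mem_union, Finset.mem_Icc] at hx
    obtain ⟨t, ht, hv⟩ := C.hsurj x (by omega) (by omega) (by omega)
    exact Finset.mem_image.mpr ⟨t, Finset.mem_range.mpr ht, hv⟩
  have hdisj : Disjoint (Finset.Icc 1 (m + 1)) (Finset.Icc (m + p + 2) (l + 1)) := by
    rw [Finset.disjoint_left]
    intro x hx1 hx2
    simp only [Finset.mem_Icc] at hx1 hx2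
    omega
  have hcardA : A.card = C.N := by
    rw [hA, Finset.card_union_of_disjoint hdisj, Nat.card_Icc, Nat.card_Icc]
    omega
  have himg : ((Finset.range C.N).image C.val).card = (Finset.range C.N).card := by
    have hle := Finset.card_image_le (s := Finset.range C.N) (f := C.val)
    have hge : A.card ≤ ((Finset.range C.N).image C.val).card := Finset.card_le_card hsub2
    rw [Finset.card_range] at hle ⊢
    omega
  have hinj := Finset.card_image_iff.mp himg
  exact hinj (by simpa using h1) (by simpa using h2) h

include C in
lemma moved_iff (x : ℕ) : s x ≠ x ↔ (1 ≤ x ∧ x ≤ l + 1 ∧ ¬(m + 2 ≤ x ∧ x ≤ m + p + 1)) := by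
  constructor
  · intro hmoved
    by_contra hc
    exact hmoved (C.hfix x (by omega))
  · rintro ⟨h1, h2, h3⟩
    obtain ⟨t, ht, rfl⟩ := C.hsurj x h1 h2 h3
    rw [C.hs t]
    intro hc
    by_cases h4 : t + 1 < C.N
    · have := C.val_injOn h4 ht hc; omega
    · have hN : t + 1 = C.N := by omega
      rw [hN, show C.N = 0 + C.N from (zero_add _).symm, C.hper] at hc
      have h5 := C.val_injOn C.Npos ht hc
      have := C.hN1; have := C.hm2
      omega

lemma traj {x : ℕ} (hx : s x ≠ x) :
    ∃ t, t < C.N ∧ C.val t = x ∧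
      ∀ j, ((s⁻¹ : Equiv.Perm ℕ) ^ j) x = C.val (C.bst^[j] t) ∧ C.bst^[j] t < C.N := by
  obtain ⟨h1, h2, h3⟩ := (C.moved_iff x).mp hx
  obtain ⟨t, ht, rfl⟩ := C.hsurj x h1 h2 h3
  exact ⟨t, ht, rfl, fun j => C.sinv_pow_val j ht⟩

lemma val_big {u : ℕ} (hu : u < C.N) (h : C.lo + 1 ≤ u ∧ u ≤ C.hi - 1) :
    m + p + 2 ≤ C.val u := by
  have hL := C.hL u hu
  have hr := C.hrange u hu
  have hhi := C.hhiN
  have : ¬ (C.val u ≤ m + 1) := by rw [hL]; omega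
  omega

lemma val_small {u : ℕ} (hu : u < C.N) (h : u ≤ C.lo ∨ C.hi ≤ u) : C.val u ≤ m + 1 :=
  (C.hL u hu).mpr h

lemma arc_of_big {u : ℕ} (hu : u < C.N) (h : m + 2 ≤ C.val u) :
    C.lo + 1 ≤ u ∧ u ≤ C.hi - 1 := by
  have hL := C.hL u hu
  have : ¬ (u ≤ C.lo ∨ C.hi ≤ u) := by rw [← hL]; omega
  omega

lemma arc_of_small {u : ℕ} (hu : u < C.N) (h : C.val u ≤ m + p + 1) :
    u ≤ C.lo ∨ C.hi ≤ u := by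
  have hr := C.hrange u hu
  exact (C.hL u hu).mp (by omega)

end Cyc
namespace Cyc

variable {l m p : ℕ} {s : Equiv.Perm ℕ} (C : Cyc l m p s)

/-- For a root `e_aF - e_x` with `aF` fixed: its trajectory data and depth. -/
lemma depthC_of_DKk {k aF x : ℕ} (hk : 1 ≤ k) (hq : rt aF x ∈ DeltaKk l s k)
    (hfa : s aF = aF) (h1 : m + 2 ≤ aF) (h2 : aF ≤ m + p + 1) :
    ∃ t, t < C.N ∧ C.val t = x ∧
      (∀ j, ((s⁻¹ : Equiv.Perm ℕ) ^ j) x = C.val (C.bst^[j] t) ∧ C.bst^[j] t < C.N) ∧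
      (C.lo + 1 ≤ t ∧ t ≤ C.hi - 1) ∧ k = t - C.lo ∧ C.bst^[k] t = C.lo := by
  obtain ⟨e1, e2, hmov, hxy, _, _⟩ := DKk_elim hk hq
  have hxm : s x ≠ x := fun hc => hmov ⟨hfa, hc⟩
  obtain ⟨t, ht, hv, htraj⟩ := C.traj hxm
  have harc : ∀ j, j ≤ k - 1 → (C.lo + 1 ≤ C.bst^[j] t ∧ C.bst^[j] t ≤ C.hi - 1) := by
    intro j hj
    refine C.arc_of_big (htraj j).2 ?_
    have hs1 := (e1 j hj).1
    rw [fix_pow hfa, (htraj j).1] at hs1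
    omega
  have harcK : C.bst^[k] t ≤ C.lo ∨ C.hi ≤ C.bst^[k] t := by
    refine C.arc_of_small (htraj k).2 ?_
    have hs1 := e2.1
    rw [fix_pow hfa, (htraj k).1] at hs1
    omega
  have ht0 : C.lo + 1 ≤ t ∧ t ≤ C.hi - 1 := by
    have := harc 0 (by omega); simpa using this
  have hhiN := C.hhiN
  have hkk : k = t - C.lo := by
    by_contra hne
    rcases Nat.lt_or_ge k (t - C.lo) with hlt | hge
    · have := C.iter_bst_le ht (show k ≤ t by omega)
      omega
    · have hj0 : t - C.lo ≤ k - 1 := by omega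
      have := harc (t - C.lo) hj0
      rw [C.iter_bst_le ht (by omega)] at this
      omega
  refine ⟨t, ht, hv, htraj, ht0, hkk, ?_⟩
  rw [C.iter_bst_le ht (by omega)]
  omega

/-- For a root `e_x - e_bF` with `bF` fixed: depth ≤ m+1 and exit at position hi-1. -/
lemma depthR_of_DKk {k bF x : ℕ} (hk : 1 ≤ k) (hq : rt x bF ∈ DeltaKk l s k)
    (hfb : s bF = bF) (h1 : m + 2 ≤ bF) (h2 : bF ≤ m + p + 1) :
    ∃ t, t < C.N ∧ C.val t = x ∧
      (∀ j, ((s⁻¹ : Equiv.Perm ℕ) ^ j) x = C.val (C.bst^[j] t) ∧ C.bst^[j] t < C.N) ∧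
      k ≤ m + 1 ∧ C.bst^[k] t = C.hi - 1 := by
  obtain ⟨e1, e2, hmov, hxy, _, _⟩ := DKk_elim hk hq
  have hxm : s x ≠ x := fun hc => hmov ⟨hc, hfb⟩
  obtain ⟨t, ht, hv, htraj⟩ := C.traj hxm
  have harc : ∀ j, j ≤ k - 1 → (C.bst^[j] t ≤ C.lo ∨ C.hi ≤ C.bst^[j] t) := by
    intro j hj
    refine C.arc_of_small (htraj j).2 ?_
    have hs1 := (e1 j hj).1
    rw [fix_pow hfb, (htraj j).1] at hs1
    omega
  have harcK : C.lo + 1 ≤ C.bst^[k] t ∧ C.bst^[k] t ≤ C.hi - 1 := by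
    refine C.arc_of_big (htraj k).2 ?_
    have hs1 := e2.1
    rw [fix_pow hfb, (htraj k).1] at hs1
    omega
  have ht0 : t ≤ C.lo ∨ C.hi ≤ t := by
    have := harc 0 (by omega); simpa using this
  have hhiN := C.hhiN; have hLsize := C.hLsize
  have h1lo := C.h1lo; have hloM := C.hloM; have hMhi := C.hMhi
  rcases ht0 with htL | htR
  · -- t ≤ lo ; K = t + N - hi + 1
    have hkk : k = t + C.N - C.hi + 1 := by
      by_contra hne
      rcases Nat.lt_or_ge k (t + C.N - C.hi + 1) with hlt | hge
      · rcases le_or_gt k t with hkt | hkt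
        · have := C.iter_bst_le ht hkt; omega
        · have := C.iter_bst_wrap ht hkt (by omega); omega
      · have hj0 : t + C.N - C.hi + 1 ≤ k - 1 := by omega
        have h5 := harc (t + C.N - C.hi + 1) hj0
        rw [C.iter_bst_wrap ht (by omega) (by omega)] at h5
        omega
    refine ⟨t, ht, hv, htraj, by omega, ?_⟩
    rw [C.iter_bst_wrap ht (by omega) (by omega)]
    omega
  · -- hi ≤ t ; K = t - hi + 1
    have hkk : k = t - C.hi + 1 := by
      by_contra hne
      rcases Nat.lt_or_ge k (t - C.hi + 1) with hlt | hge
      · have := C.iter_bst_le ht (show k ≤ t by omega); omega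
      · have hj0 : t - C.hi + 1 ≤ k - 1 := by omega
        have h5 := harc (t - C.hi + 1) hj0
        rw [C.iter_bst_le ht (by omega)] at h5
        omega
    refine ⟨t, ht, hv, htraj, by omega, ?_⟩
    rw [C.iter_bst_le ht (by omega)]
    omega

include C in
lemma gateC {k aF x y : ℕ} (hk : 1 ≤ k)
    (hqx : rt aF x ∈ DeltaKk l s k) (hqy : rt aF y ∈ DeltaKk l s k)
    (hfa : s aF = aF) (h1 : m + 2 ≤ aF) (h2 : aF ≤ m + p + 1) : x = y := by
  obtain ⟨t1, ht1, hv1, htr1, _, _, he1⟩ := C.depthC_of_DKk hk hqx hfa h1 h2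
  obtain ⟨t2, ht2, hv2, htr2, _, _, he2⟩ := C.depthC_of_DKk hk hqy hfa h1 h2
  have e : ((s⁻¹ : Equiv.Perm ℕ) ^ k) x = ((s⁻¹ : Equiv.Perm ℕ) ^ k) y := by
    rw [(htr1 k).1, (htr2 k).1, he1, he2]
  exact ((s⁻¹ : Equiv.Perm ℕ) ^ k).injective e

include C in
lemma gateR {k bF x y : ℕ} (hk : 1 ≤ k)
    (hqx : rt x bF ∈ DeltaKk l s k) (hqy : rt y bF ∈ DeltaKk l s k)
    (hfb : s bF = bF) (h1 : m + 2 ≤ bF) (h2 : bF ≤ m + p + 1) : x = y := by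
  obtain ⟨t1, ht1, hv1, htr1, _, he1⟩ := C.depthR_of_DKk hk hqx hfb h1 h2
  obtain ⟨t2, ht2, hv2, htr2, _, he2⟩ := C.depthR_of_DKk hk hqy hfb h1 h2
  have e : ((s⁻¹ : Equiv.Perm ℕ) ^ k) x = ((s⁻¹ : Equiv.Perm ℕ) ^ k) y := by
    rw [(htr1 k).1, (htr2 k).1, he1, he2]
  exact ((s⁻¹ : Equiv.Perm ℕ) ^ k).injective e

include C in
lemma dwellC {k i aF c b : ℕ} (hk : 2 ≤ k) (hi2 : 2 ≤ i) (hik : i < k)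
    (hκ : rt aF b ∈ DeltaKk l s k) (hq1 : rt aF c ∈ DeltaKk l s i)
    (hq2 : rt c b ∈ DeltaKk l s k)
    (hfa : s aF = aF) (h1 : m + 2 ≤ aF) (h2 : aF ≤ m + p + 1) : False := by
  obtain ⟨tb, htb, hvb, htrb, harcb, hkb, hlob⟩ := C.depthC_of_DKk (by omega) hκ hfa h1 h2
  obtain ⟨tc, htc, hvc, htrc, harcc, hkc, _⟩ := C.depthC_of_DKk (by omega) hq1 hfa h1 h2
  obtain ⟨_, e2, _, _⟩ := DKk_elim (show 1 ≤ k by omega) hq2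
  -- e2.1 : Sk b < Sk c
  have hSb : ((s⁻¹ : Equiv.Perm ℕ) ^ k) b = C.val C.lo := by rw [(htrb k).1, hlob]
  have hLsize := C.hLsize; have hN2 := C.hN2; have hhiN := C.hhiN
  have hloM := C.hloM; have h1lo := C.h1lo
  have hdle : k - i ≤ m := by omega
  have hneg := e2.1
  rw [hSb, (htrc k).1] at hneg
  -- hneg : val lo < val (bst^[k] tc)
  rcases le_or_gt k tc with hcase | hcase
  · have huc : C.bst^[k] tc = tc - k := C.iter_bst_le htc hcase
    have : C.val (tc - k) < C.val C.lo := C.hup _ _ (by omega) (by omega)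
    rw [huc] at hneg
    omega
  · have huc : C.bst^[k] tc = tc + C.N - k := C.iter_bst_wrap htc hcase (by omega)
    have hu1 : C.hi ≤ tc + C.N - k := by omega
    have hu2 : tc + C.N - k < C.N := by omega
    have hsm : C.val (tc + C.N - k) ≤ m + 1 := C.val_small hu2 (Or.inr hu1)
    have hne : C.val (tc + C.N - k) ≠ m + 1 := by
      intro hc
      have := C.val_injOn hu2 (show C.lo < C.N by omega) (by rw [hc, C.hLmax])
      omega
    rw [huc, C.hLmax] at hneg
    omega

include C in
lemma dwellR {k i bF a c : ℕ} (hk : 2 ≤ k) (hi2 : 2 ≤ i) (hik : i < k)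
    (hκ : rt a bF ∈ DeltaKk l s k) (hq1 : rt c bF ∈ DeltaKk l s i)
    (hq2 : rt a c ∈ DeltaKk l s k)
    (hfb : s bF = bF) (h1 : m + 2 ≤ bF) (h2 : bF ≤ m + p + 1) : False := by
  obtain ⟨ta, hta, hva, htra, hka, hha⟩ := C.depthR_of_DKk (by omega) hκ hfb h1 h2
  obtain ⟨tc, htc, hvc, htrc, hkc, hhc⟩ := C.depthR_of_DKk (by omega) hq1 hfb h1 h2
  obtain ⟨_, e2, _, _⟩ := DKk_elim (show 1 ≤ k by omega) hq2
  -- e2.1 : Sk c < Sk a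
  have hLsize := C.hLsize; have hN1 := C.hN1; have hhiN := C.hhiN
  have hloM := C.hloM; have h1lo := C.h1lo; have hMhi := C.hMhi; have hm2 := C.hm2
  have hSa : ((s⁻¹ : Equiv.Perm ℕ) ^ k) a = m + p + 2 := by
    rw [(htra k).1, hha, C.hRmin]
  have hsplit : C.bst^[k] tc = C.bst^[k - i] (C.bst^[i] tc) := by
    rw [← Function.iterate_add_apply]
    congr 1
    omega
  have hu : C.bst^[k] tc = C.hi - 1 - (k - i) := by
    rw [hsplit, hhc, C.iter_bst_le (by omega) (by omega)]
  have harc : C.lo + 1 ≤ C.hi - 1 - (k - i) ∧ C.hi - 1 - (k - i) ≤ C.hi - 1 := by omega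
  have hbig : m + p + 2 ≤ C.val (C.hi - 1 - (k - i)) := C.val_big (by omega) harc
  have hne : C.val (C.hi - 1 - (k - i)) ≠ m + p + 2 := by
    intro hc
    have := C.val_injOn (show C.hi - 1 - (k - i) < C.N by omega)
      (show C.hi - 1 < C.N by omega) (by rw [hc, C.hRmin])
    omega
  have hneg := e2.1
  rw [hSa, (htrc k).1, hu] at hneg
  omega

include C in
lemma no_flip {q r : ℕ} (hq : q < C.N) (hr : r < C.N)
    (hU : (1 ≤ q ∧ q ≤ C.M) ↔ (1 ≤ r ∧ r ≤ C.M))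
    (hlt : C.val q < C.val r) : C.val (C.bst q) < C.val (C.bst r) := by
  have hNpos := C.Npos
  have hqr : q ≠ r := fun h => by rw [h] at hlt; omega
  by_cases hq1 : 1 ≤ q ∧ q ≤ C.M
  · have hr1 := hU.mp hq1
    have hqlt : q < r := by
      rcases Nat.lt_trichotomy q r with h | h | h
      · exact h
      · omega
      · have := C.hup r q h hq1.2; omega
    have := C.hup (q - 1) (r - 1) (by omega) (by omega)
    rw [bst, if_neg (by omega), bst, if_neg (by omega)]
    exact this
  · have hr1 : ¬(1 ≤ r ∧ r ≤ C.M) := fun h => hq1 (hU.mpr h)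
    set Q := if q = 0 then C.N else q with hQ
    set R := if r = 0 then C.N else r with hR
    have hvQ : C.val Q = C.val q := by
      rw [hQ]; split_ifs with h
      · rw [h, show C.N = 0 + C.N from (zero_add _).symm, C.hper]
      · rfl
    have hvR : C.val R = C.val r := by
      rw [hR]; split_ifs with h
      · rw [h, show C.N = 0 + C.N from (zero_add _).symm, C.hper]
      · rfl
    have hQr : C.M + 1 ≤ Q ∧ Q ≤ C.N := by
      have := C.hMhi; have := C.hhiN
      rw [hQ]; split_ifs <;> omega
    have hRr : C.M + 1 ≤ R ∧ R ≤ C.N := by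
      have := C.hMhi; have := C.hhiN
      rw [hR]; split_ifs <;> omega
    have hQR : Q ≠ R := by
      rw [hQ, hR]; split_ifs <;> omega
    have hRQ : R < Q := by
      rcases Nat.lt_trichotomy Q R with h | h | h
      · have := C.hdown Q R (by omega) h (by omega)
        rw [hvQ, hvR] at this; omega
      · omega
      · exact h
    have hbq : C.bst q = Q - 1 := by rw [bst, hQ]; split_ifs <;> omega
    have hbr : C.bst r = R - 1 := by rw [bst, hR]; split_ifs <;> omega
    have := C.hdown (R - 1) (Q - 1) (by omega) (by omega) (by omega)
    rw [hbq, hbr]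
    exact this

include C in
lemma triple_flip {qa qc qb : ℕ} (ha : qa < C.N) (hc : qc < C.N) (hb : qb < C.N)
    (F1 : C.val qa < C.val qc) (F2 : C.val qc < C.val qb)
    (G1 : C.val (C.bst qc) < C.val (C.bst qa))
    (G2 : C.val (C.bst qb) < C.val (C.bst qc)) : False := by
  by_cases A : 1 ≤ qa ∧ qa ≤ C.M <;> by_cases B : 1 ≤ qc ∧ qc ≤ C.M <;>
    by_cases D : 1 ≤ qb ∧ qb ≤ C.M
  · have := C.no_flip ha hc (iff_of_true A B) F1; omega
  · have := C.no_flip ha hc (iff_of_true A B) F1; omega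
  · have := C.no_flip ha hb (iff_of_true A D) (F1.trans F2); omega
  · have := C.no_flip hc hb (iff_of_false B D) F2; omega
  · have := C.no_flip hc hb (iff_of_true B D) F2; omega
  · have := C.no_flip ha hb (iff_of_false A D) (F1.trans F2); omega
  · have := C.no_flip ha hc (iff_of_false A B) F1; omega
  · have := C.no_flip ha hc (iff_of_false A B) F1; omega

include C in
lemma tripleO {a c b k : ℕ} (hk : 2 ≤ k)
    (ha : s a ≠ a) (hc : s c ≠ c) (hb : s b ≠ b)
    (h1 : rt a c ∈ DeltaKk l s k) (h2 : rt c b ∈ DeltaKk l s k)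
    (h3 : rt a b ∈ DeltaKk l s k) : False := by
  obtain ⟨f1, g1, _, _⟩ := DKk_elim (show 1 ≤ k by omega) h1
  obtain ⟨f2, g2, _, _⟩ := DKk_elim (show 1 ≤ k by omega) h2
  obtain ⟨ta, hta, hva, htra⟩ := C.traj ha
  obtain ⟨tc, htc, hvc, htrc⟩ := C.traj hc
  obtain ⟨tb, htb, hvb, htrb⟩ := C.traj hb
  have hua1 : C.bst^[k - 1] ta < C.N := (htra (k - 1)).2
  have huc1 : C.bst^[k - 1] tc < C.N := (htrc (k - 1)).2
  have hub1 : C.bst^[k - 1] tb < C.N := (htrb (k - 1)).2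
  have hkk : k = (k - 1) + 1 := by omega
  have hsa : C.bst^[k] ta = C.bst (C.bst^[k - 1] ta) := by
    conv_lhs => rw [hkk]
    rw [Function.iterate_succ_apply']
  have hsc : C.bst^[k] tc = C.bst (C.bst^[k - 1] tc) := by
    conv_lhs => rw [hkk]
    rw [Function.iterate_succ_apply']
  have hsb : C.bst^[k] tb = C.bst (C.bst^[k - 1] tb) := by
    conv_lhs => rw [hkk]
    rw [Function.iterate_succ_apply']
  have F1 : C.val (C.bst^[k - 1] ta) < C.val (C.bst^[k - 1] tc) := by
    have h := (f1 (k - 1) le_rfl).1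
    rwa [(htra (k - 1)).1, (htrc (k - 1)).1] at h
  have F2 : C.val (C.bst^[k - 1] tc) < C.val (C.bst^[k - 1] tb) := by
    have h := (f2 (k - 1) le_rfl).1
    rwa [(htrc (k - 1)).1, (htrb (k - 1)).1] at h
  have G1 : C.val (C.bst (C.bst^[k - 1] tc)) < C.val (C.bst (C.bst^[k - 1] ta)) := by
    have h := g1.1
    rwa [(htra k).1, (htrc k).1, hsa, hsc] at h
  have G2 : C.val (C.bst (C.bst^[k - 1] tb)) < C.val (C.bst (C.bst^[k - 1] tc)) := by
    have h := g2.1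
    rwa [(htrc k).1, (htrb k).1, hsc, hsb] at h
  exact C.triple_flip hua1 huc1 hub1 F1 F2 G1 G2

end Cyc
namespace Cyc

variable {l m p : ℕ} {s : Equiv.Perm ℕ} (C : Cyc l m p s)

include C in
lemma no_pair {k i a b : ℕ} (hk : 2 ≤ k) (hi2 : 2 ≤ i) (hik : i ≤ k)
    (hκ : rt a b ∈ DeltaKk l s k)
    (hOK : (s a = a ∨ s b = b) ∨ (i = k ∧ (m + p + 2 ≤ a ∨ b ≤ m + 1)))
    {q1 q2 : V} (hq1 : q1 ∈ DeltaKk l s i) (hq2 : q2 ∈ DeltaKk l s k)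
    (hsum : rt a b = q1 + q2) : False := by
  have hm2 := C.hm2
  obtain ⟨x, y, hx1, hxy, hyl, hq1e⟩ := hq1.1.1
  obtain ⟨u, v, hu1, huv, hvl, hq2e⟩ := hq2.1.1
  subst hq1e; subst hq2e
  obtain ⟨_, _, hmovab, hab, ha1, hbl⟩ := DKk_elim (show 1 ≤ k by omega) hκ
  rcases root_sum_split hab hxy huv hsum with ⟨he1, he2, he3⟩ | ⟨he1, he2, he3⟩
  · -- q1 = rt a y, q2 = rt y b; c := y
    rw [he1] at hq1 hxy
    rw [← he2, he3] at hq2 huv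
    rcases hOK with hfa | hfb | ⟨rfl, hor⟩
    · rcases hfa with hfa | hfb
      · have hfr : m + 2 ≤ a ∧ a ≤ m + p + 1 := by
          by_contra hc
          exact (C.moved_iff a).mpr ⟨ha1, by omega, by omega⟩ hfa
        by_cases hcf : s y = y
        · exact (DKk_elim (show 1 ≤ i by omega) hq1).2.2.1 ⟨hfa, hcf⟩
        · by_cases hieq : i = k
          · subst hieq
            have := C.gateC (show 1 ≤ i by omega) hκ hq1 hfa hfr.1 hfr.2
            omega
          · exact C.dwellC hk hi2 (by omega) hκ hq1 hq2 hfa hfr.1 hfr.2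
      · have hfr : m + 2 ≤ b ∧ b ≤ m + p + 1 := by
          by_contra hc
          exact (C.moved_iff b).mpr ⟨by omega, hbl, by omega⟩ hfb
        by_cases hcf : s y = y
        · exact (DKk_elim (show 1 ≤ k by omega) hq2).2.2.1 ⟨hcf, hfb⟩
        · have := C.gateR (show 1 ≤ k by omega) hκ hq2 hfb hfr.1 hfr.2
          omega
    · have hmova : s a ≠ a := (C.moved_iff a).mpr ⟨ha1, by omega, by omega⟩
      have hmovy : s y ≠ y := (C.moved_iff y).mpr ⟨by omega, by omega, by omega⟩
      have hmovb : s b ≠ b := (C.moved_iff b).mpr ⟨by omega, hbl, by omega⟩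
      exact C.tripleO hk hmova hmovy hmovb hq1 hq2 hκ
  · -- q1 = rt x b, q2 = rt a x; c := x
    rw [he3] at hq1 hxy
    rw [he1, he2] at hq2 huv
    rcases hOK with hfa | hfb | ⟨rfl, hor⟩
    · rcases hfa with hfa | hfb
      · have hfr : m + 2 ≤ a ∧ a ≤ m + p + 1 := by
          by_contra hc
          exact (C.moved_iff a).mpr ⟨ha1, by omega, by omega⟩ hfa
        by_cases hcf : s x = x
        · exact (DKk_elim (show 1 ≤ k by omega) hq2).2.2.1 ⟨hfa, hcf⟩
        · have := C.gateC (show 1 ≤ k by omega) hκ hq2 hfa hfr.1 hfr.2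
          omega
      · have hfr : m + 2 ≤ b ∧ b ≤ m + p + 1 := by
          by_contra hc
          exact (C.moved_iff b).mpr ⟨by omega, hbl, by omega⟩ hfb
        by_cases hcf : s x = x
        · exact (DKk_elim (show 1 ≤ i by omega) hq1).2.2.1 ⟨hcf, hfb⟩
        · by_cases hieq : i = k
          · subst hieq
            have := C.gateR (show 1 ≤ i by omega) hκ hq1 hfb hfr.1 hfr.2
            omega
          · exact C.dwellR hk hi2 (by omega) hκ hq1 hq2 hfb hfr.1 hfr.2
    · have hmova : s a ≠ a := (C.moved_iff a).mpr ⟨ha1, by omega, by omega⟩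
      have hmovx : s x ≠ x := (C.moved_iff x).mpr ⟨by omega, by omega, by omega⟩
      have hmovb : s b ≠ b := (C.moved_iff b).mpr ⟨by omega, hbl, by omega⟩
      exact C.tripleO hk hmova hmovx hmovb hq2 hq1 hκ

include C in
theorem main_of_cyc :
    ∀ k, 2 ≤ k → ∀ κ ∈ DeltaKk l s k,
      (κ ∈ DeltaC l s ∪ DeltaR l s → Pk l s k κ = ∅) ∧
      (κ ∈ DeltaKpos l s \ DeltaO3 l s m p → Pk' l s k κ = ∅) := by
  intro k hk κ hκ'
  obtain ⟨a, b, ha1, hab, hbl, hκe⟩ := hκ'.1.1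
  subst hκe
  have hκ := hκ'
  have hsab : s a ≠ s b := fun h => absurd (s.injective h) (by omega)
  constructor
  · intro hCR
    have hclass : s a = a ∨ s b = b := by
      rcases hCR with hC | hR
      · left
        have h2 := hC.2
        rwa [pact_rt, rowOf_rt (show a ≠ b by omega), rowOf_rt hsab] at h2
      · right
        have h2 := hR.2
        rwa [pact_rt, colOf_rt (show a ≠ b by omega), colOf_rt hsab] at h2
    ext ⟨q1, q2⟩
    simp only [Pk, Set.mem_setOf_eq, Set.mem_empty_iff_false, iff_false]
    rintro ⟨⟨i, hi2, hik, hq1⟩, hq2, hsum⟩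
    exact C.no_pair hk hi2 (by omega) hκ (Or.inl hclass) hq1 hq2 hsum
  · intro hNO3
    have hclass : (s a = a ∨ s b = b) ∨ (m + p + 2 ≤ a ∨ b ≤ m + 1) := by
      obtain ⟨hKp, hO3⟩ := hNO3
      by_cases hCb : s a = a ∨ s b = b
      · exact Or.inl hCb
      · right
        push_neg at hCb
        have hinO : rt a b ∈ DeltaO l s := by
          refine ⟨hKp, ?_⟩
          rintro (hC | hR)
          · have h2 := hC.2
            rw [pact_rt, rowOf_rt (show a ≠ b by omega), rowOf_rt hsab] at h2
            exact hCb.1 h2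
          · have h2 := hR.2
            rw [pact_rt, colOf_rt (show a ≠ b by omega), colOf_rt hsab] at h2
            exact hCb.2 h2
        by_contra hno
        push_neg at hno
        apply hO3
        refine ⟨hinO, ?_⟩
        rintro (h1 | h2)
        · have := h1.2
          rw [rowOf_rt (show a ≠ b by omega)] at this
          omega
        · have := h2.2
          rw [colOf_rt (show a ≠ b by omega)] at this
          omega
    ext ⟨q1, q2⟩
    simp only [Pk', Set.mem_setOf_eq, Set.mem_empty_iff_false, iff_false]
    rintro ⟨hq1, hq2, hsum⟩
    rcases hclass with h | h
    · exact C.no_pair hk hk le_rfl hκ (Or.inl h) hq1 hq2 hsum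
    · exact C.no_pair hk hk le_rfl hκ (Or.inr ⟨rfl, h⟩) hq1 hq2 hsum

end Cyc
/- ===================== swapProd evaluation helpers ===================== -/

lemma sp_out {a n x : ℕ} (h : x < a ∨ a + 2*n ≤ x) : swapProd (List.range' a n 2) x = x := by
  rw [swapProd_apply, if_neg (by omega)]

lemma sp_lo {a n x : ℕ} (h1 : a ≤ x) (h2 : x < a + 2*n) (h3 : (x - a) % 2 = 0) :
    swapProd (List.range' a n 2) x = x + 1 := by
  rw [swapProd_apply, if_pos ⟨h1, h2⟩, if_pos h3]

lemma sp_hi {a n x : ℕ} (h1 : a ≤ x) (h2 : x < a + 2*n) (h3 : (x - a) % 2 = 1) :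
    swapProd (List.range' a n 2) x = x - 1 := by
  rw [swapProd_apply, if_pos ⟨h1, h2⟩, if_neg (by omega)]

lemma weylS_apply_i (h p l l' : ℕ) (hh : 1 ≤ h) (hl' : l' = 4*h + 1) (hl : l = l' + p) (x : ℕ) :
    weylS l l' x = swapProd (List.range' 2 h 2)
      (swapProd (List.range' (2*h+p+2) h 2)
        (swapProd (List.range' 1 h 2)
          (Equiv.swap (2*h+1) (2*h+p+2)
            (swapProd (List.range' (2*h+p+3) h 2) x)))) := by
  have e1 : (l' - 1)/2 = 2*h := by omega
  have e2 : l - l' = p := by omega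
  have e3 : (2*h) % 2 = 0 := by omega
  have e4 : l' % 2 = 1 := by omega
  have e5 : (2*h)/2 = h := by omega
  simp only [weylS, e1, e2, e3, e4, e5, if_pos, if_true]
  norm_num
/- ===================== Case (i): m = 2h, l' = 4h+1 ===================== -/

def f1 (h p r : ℕ) : ℕ :=
  if r ≤ h then 2*r + 1
  else if r ≤ 2*h then 2*r + p + 1
  else if r = 2*h + 1 then 4*h + p + 2
  else if r ≤ 3*h + 1 then 8*h + p + 4 - 2*r
  else 8*h + 4 - 2*r

def valI (h p : ℕ) : ℕ → ℕ := fun t => f1 h p (t % (4*h+2))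

set_option maxHeartbeats 4000000 in
def cyc_i (h p l l' : ℕ) (hh : 1 ≤ h) (hl' : l' = 4*h + 1) (hl : l = l' + p) :
    Cyc l (2*h) p (weylS l l') := by
  refine
  { N := 4*h+2, M := 2*h+1, lo := h, hi := 3*h+2,
    val := valI h p,
    hm2 := by omega, hNp := by omega, hN1 := by omega, hN2 := by omega,
    h1lo := by omega, hloM := by omega, hMhi := by omega, hhiN := by omega,
    hLsize := by omega,
    hper := by intro t; simp only [valI, Nat.add_mod_right],
    hup := by
      intro t1 t2 hlt hle
      simp only [valI]
      rw [Nat.mod_eq_of_lt (by omega), Nat.mod_eq_of_lt (by omega)]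
      simp only [f1]; split_ifs <;> first | exact ‹False›.elim | omega,
    hdown := by
      intro t1 t2 h1 h2 h3
      simp only [valI]
      by_cases ht2 : t2 = 4*h+2
      · subst ht2
        rw [Nat.mod_self, Nat.mod_eq_of_lt (by omega)]
        simp only [f1]; split_ifs <;> first | exact ‹False›.elim | omega
      · rw [Nat.mod_eq_of_lt (by omega), Nat.mod_eq_of_lt (by omega)]
        simp only [f1]; split_ifs <;> first | exact ‹False›.elim | omega,
    hL := by
      intro t ht
      simp only [valI]
      rw [Nat.mod_eq_of_lt ht]
      simp only [f1]; split_ifs <;> first | exact ‹False›.elim | omega,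
    hrange := by
      intro t ht
      simp only [valI]
      rw [Nat.mod_eq_of_lt ht]
      simp only [f1]; split_ifs <;> first | exact ‹False›.elim | omega,
    hsurj := by
      intro x h1 h2 h3
      simp only [valI]
      by_cases hxL : x ≤ 2*h+1
      · rcases Nat.even_or_odd x with ⟨u, hu⟩ | ⟨u, hu⟩
        · refine ⟨4*h+2-u, by omega, ?_⟩
          rw [Nat.mod_eq_of_lt (by omega)]
          simp only [f1]; split_ifs <;> first | exact ‹False›.elim | omega
        · refine ⟨u, by omega, ?_⟩
          rw [Nat.mod_eq_of_lt (by omega)]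
          simp only [f1]; split_ifs <;> first | exact ‹False›.elim | omega
      · rcases Nat.even_or_odd (x - p) with ⟨u, hu⟩ | ⟨u, hu⟩
        · by_cases hpk : x = 4*h+p+2
          · refine ⟨2*h+1, by omega, ?_⟩
            rw [Nat.mod_eq_of_lt (by omega)]
            simp only [f1]; split_ifs <;> first | exact ‹False›.elim | omega
          · refine ⟨4*h+2-u, by omega, ?_⟩
            rw [Nat.mod_eq_of_lt (by omega)]
            simp only [f1]; split_ifs <;> first | exact ‹False›.elim | omega
        · refine ⟨u, by omega, ?_⟩
          rw [Nat.mod_eq_of_lt (by omega)]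
          simp only [f1]; split_ifs <;> first | exact ‹False›.elim | omega,
    hfix := by
      intro x hx
      rw [weylS_apply_i h p l l' hh hl' hl]
      have s1 : swapProd (List.range' (2*h+p+3) h 2) x = x := sp_out (by omega)
      have s2 : Equiv.swap (2*h+1) (2*h+p+2) x = x :=
        Equiv.swap_apply_of_ne_of_ne (by omega) (by omega)
      have s3 : swapProd (List.range' 1 h 2) x = x := sp_out (by omega)
      have s4 : swapProd (List.range' (2*h+p+2) h 2) x = x := sp_out (by omega)
      have s5 : swapProd (List.range' 2 h 2) x = x := sp_out (by omega)
      rw [s1, s2, s3, s4, s5],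
    hLmax := by
      simp only [valI]
      rw [Nat.mod_eq_of_lt (by omega)]
      simp only [f1]; split_ifs <;> first | exact ‹False›.elim | omega,
    hRmin := by
      simp only [valI]
      rw [Nat.mod_eq_of_lt (by omega)]
      simp only [f1]; split_ifs <;> first | exact ‹False›.elim | omega,
    hs := ?_ }
  intro t
  simp only [valI]
  set r := t % (4*h+2) with hrdef
  have hr : r < 4*h+2 := Nat.mod_lt _ (by omega)
  have hr1 : (t+1) % (4*h+2) = if r = 4*h+1 then 0 else r + 1 := by
    rw [← Nat.mod_add_mod, ← hrdef]
    split_ifs with he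
    · rw [he, show 4*h+1+1 = 4*h+2 by omega, Nat.mod_self]
    · exact Nat.mod_eq_of_lt (by omega)
  rw [hr1, weylS_apply_i h p l l' hh hl' hl]
  clear hr1
  clear_value r
  clear hrdef
  rcases (by omega :
      r < h ∨ r = h ∨ (h+1 ≤ r ∧ r ≤ 2*h-1) ∨ r = 2*h ∨ r = 2*h+1 ∨
      (2*h+2 ≤ r ∧ r ≤ 3*h) ∨ r = 3*h+1 ∨ (3*h+2 ≤ r ∧ r ≤ 4*h) ∨ r = 4*h+1)
    with hc|hc|hc|hc|hc|hc|hc|hc|hc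
  · -- r < h : 2r+1 ↦ 2r+3
    rw [if_neg (by omega),
        show f1 h p r = 2*r+1 from by simp only [f1]; split_ifs <;> first | exact ‹False›.elim | omega,
        show f1 h p (r+1) = 2*r+3 from by simp only [f1]; split_ifs <;> first | exact ‹False›.elim | omega]
    have s1 : swapProd (List.range' (2*h+p+3) h 2) (2*r+1) = 2*r+1 := sp_out (by omega)
    have s2 : Equiv.swap (2*h+1) (2*h+p+2) (2*r+1) = 2*r+1 :=
      Equiv.swap_apply_of_ne_of_ne (by omega) (by omega)
    have s3 : swapProd (List.range' 1 h 2) (2*r+1) = 2*r+1+1 := sp_lo (by omega) (by omega) (by omega)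
    have s4 : swapProd (List.range' (2*h+p+2) h 2) (2*r+1+1) = 2*r+1+1 := sp_out (by omega)
    have s5 : swapProd (List.range' 2 h 2) (2*r+1+1) = 2*r+1+1+1 := sp_lo (by omega) (by omega) (by omega)
    rw [s1, s2, s3, s4, s5]
    all_goals omega
  · -- r = h : 2h+1 ↦ 2h+p+3
    rw [hc, if_neg (by omega),
        show f1 h p h = 2*h+1 from by simp only [f1]; split_ifs <;> first | exact ‹False›.elim | omega,
        show f1 h p (h+1) = 2*h+p+3 from by simp only [f1]; split_ifs <;> first | exact ‹False›.elim | omega]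
    have s1 : swapProd (List.range' (2*h+p+3) h 2) (2*h+1) = 2*h+1 := sp_out (by omega)
    have s2 : Equiv.swap (2*h+1) (2*h+p+2) (2*h+1) = 2*h+p+2 := Equiv.swap_apply_left _ _
    have s3 : swapProd (List.range' 1 h 2) (2*h+p+2) = 2*h+p+2 := sp_out (by omega)
    have s4 : swapProd (List.range' (2*h+p+2) h 2) (2*h+p+2) = 2*h+p+2+1 :=
      sp_lo (by omega) (by omega) (by omega)
    have s5 : swapProd (List.range' 2 h 2) (2*h+p+2+1) = 2*h+p+2+1 := sp_out (by omega)
    rw [s1, s2, s3, s4, s5]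
    all_goals omega
  · -- h+1 ≤ r ≤ 2h-1 : 2r+p+1 ↦ 2r+p+3
    rw [if_neg (by omega),
        show f1 h p r = 2*r+p+1 from by simp only [f1]; split_ifs <;> first | exact ‹False›.elim | omega,
        show f1 h p (r+1) = 2*r+p+3 from by simp only [f1]; split_ifs <;> first | exact ‹False›.elim | omega]
    have s1 : swapProd (List.range' (2*h+p+3) h 2) (2*r+p+1) = 2*r+p+1+1 :=
      sp_lo (by omega) (by omega) (by omega)
    have s2 : Equiv.swap (2*h+1) (2*h+p+2) (2*r+p+1+1) = 2*r+p+1+1 :=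
      Equiv.swap_apply_of_ne_of_ne (by omega) (by omega)
    have s3 : swapProd (List.range' 1 h 2) (2*r+p+1+1) = 2*r+p+1+1 := sp_out (by omega)
    have s4 : swapProd (List.range' (2*h+p+2) h 2) (2*r+p+1+1) = 2*r+p+1+1+1 :=
      sp_lo (by omega) (by omega) (by omega)
    have s5 : swapProd (List.range' 2 h 2) (2*r+p+1+1+1) = 2*r+p+1+1+1 := sp_out (by omega)
    rw [s1, s2, s3, s4, s5]
    all_goals omega
  · -- r = 2h : 4h+p+1 ↦ 4h+p+2
    rw [hc, if_neg (by omega),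
        show f1 h p (2*h) = 4*h+p+1 from by simp only [f1]; split_ifs <;> first | exact ‹False›.elim | omega,
        show f1 h p (2*h+1) = 4*h+p+2 from by simp only [f1]; split_ifs <;> first | exact ‹False›.elim | omega]
    have s1 : swapProd (List.range' (2*h+p+3) h 2) (4*h+p+1) = 4*h+p+1+1 :=
      sp_lo (by omega) (by omega) (by omega)
    have s2 : Equiv.swap (2*h+1) (2*h+p+2) (4*h+p+1+1) = 4*h+p+1+1 :=
      Equiv.swap_apply_of_ne_of_ne (by omega) (by omega)
    have s3 : swapProd (List.range' 1 h 2) (4*h+p+1+1) = 4*h+p+1+1 := sp_out (by omega)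
    have s4 : swapProd (List.range' (2*h+p+2) h 2) (4*h+p+1+1) = 4*h+p+1+1 := sp_out (by omega)
    have s5 : swapProd (List.range' 2 h 2) (4*h+p+1+1) = 4*h+p+1+1 := sp_out (by omega)
    rw [s1, s2, s3, s4, s5]
    all_goals omega
  · -- r = 2h+1 : 4h+p+2 ↦ 4h+p
    rw [hc, if_neg (by omega),
        show f1 h p (2*h+1) = 4*h+p+2 from by simp only [f1]; split_ifs <;> first | exact ‹False›.elim | omega,
        show f1 h p (2*h+1+1) = 4*h+p from by simp only [f1]; split_ifs <;> first | exact ‹False›.elim | omega]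
    have s1 : swapProd (List.range' (2*h+p+3) h 2) (4*h+p+2) = 4*h+p+2-1 :=
      sp_hi (by omega) (by omega) (by omega)
    have s2 : Equiv.swap (2*h+1) (2*h+p+2) (4*h+p+2-1) = 4*h+p+2-1 :=
      Equiv.swap_apply_of_ne_of_ne (by omega) (by omega)
    have s3 : swapProd (List.range' 1 h 2) (4*h+p+2-1) = 4*h+p+2-1 := sp_out (by omega)
    have s4 : swapProd (List.range' (2*h+p+2) h 2) (4*h+p+2-1) = 4*h+p+2-1-1 :=
      sp_hi (by omega) (by omega) (by omega)
    have s5 : swapProd (List.range' 2 h 2) (4*h+p+2-1-1) = 4*h+p+2-1-1 := sp_out (by omega)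
    rw [s1, s2, s3, s4, s5]
    all_goals omega
  · -- 2h+2 ≤ r ≤ 3h : 8h+p+4-2r ↦ 8h+p+2-2r
    rw [if_neg (by omega),
        show f1 h p r = 8*h+p+4-2*r from by simp only [f1]; split_ifs <;> first | exact ‹False›.elim | omega,
        show f1 h p (r+1) = 8*h+p+2-2*r from by simp only [f1]; split_ifs <;> first | exact ‹False›.elim | omega]
    have s1 : swapProd (List.range' (2*h+p+3) h 2) (8*h+p+4-2*r) = 8*h+p+4-2*r-1 :=
      sp_hi (by omega) (by omega) (by omega)
    have s2 : Equiv.swap (2*h+1) (2*h+p+2) (8*h+p+4-2*r-1) = 8*h+p+4-2*r-1 :=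
      Equiv.swap_apply_of_ne_of_ne (by omega) (by omega)
    have s3 : swapProd (List.range' 1 h 2) (8*h+p+4-2*r-1) = 8*h+p+4-2*r-1 := sp_out (by omega)
    have s4 : swapProd (List.range' (2*h+p+2) h 2) (8*h+p+4-2*r-1) = 8*h+p+4-2*r-1-1 :=
      sp_hi (by omega) (by omega) (by omega)
    have s5 : swapProd (List.range' 2 h 2) (8*h+p+4-2*r-1-1) = 8*h+p+4-2*r-1-1 := sp_out (by omega)
    rw [s1, s2, s3, s4, s5]
    all_goals omega
  · -- r = 3h+1 : 2h+p+2 ↦ 2h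
    rw [hc, if_neg (by omega),
        show f1 h p (3*h+1) = 2*h+p+2 from by simp only [f1]; split_ifs <;> first | exact ‹False›.elim | omega,
        show f1 h p (3*h+1+1) = 2*h from by simp only [f1]; split_ifs <;> first | exact ‹False›.elim | omega]
    have s1 : swapProd (List.range' (2*h+p+3) h 2) (2*h+p+2) = 2*h+p+2 := sp_out (by omega)
    have s2 : Equiv.swap (2*h+1) (2*h+p+2) (2*h+p+2) = 2*h+1 := Equiv.swap_apply_right _ _
    have s3 : swapProd (List.range' 1 h 2) (2*h+1) = 2*h+1 := sp_out (by omega)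
    have s4 : swapProd (List.range' (2*h+p+2) h 2) (2*h+1) = 2*h+1 := sp_out (by omega)
    have s5 : swapProd (List.range' 2 h 2) (2*h+1) = 2*h+1-1 :=
      sp_hi (by omega) (by omega) (by omega)
    rw [s1, s2, s3, s4, s5]
    all_goals omega
  · -- 3h+2 ≤ r ≤ 4h : 8h+4-2r ↦ 8h+2-2r
    rw [if_neg (by omega),
        show f1 h p r = 8*h+4-2*r from by simp only [f1]; split_ifs <;> first | exact ‹False›.elim | omega,
        show f1 h p (r+1) = 8*h+2-2*r from by simp only [f1]; split_ifs <;> first | exact ‹False›.elim | omega]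
    have s1 : swapProd (List.range' (2*h+p+3) h 2) (8*h+4-2*r) = 8*h+4-2*r := sp_out (by omega)
    have s2 : Equiv.swap (2*h+1) (2*h+p+2) (8*h+4-2*r) = 8*h+4-2*r :=
      Equiv.swap_apply_of_ne_of_ne (by omega) (by omega)
    have s3 : swapProd (List.range' 1 h 2) (8*h+4-2*r) = 8*h+4-2*r-1 :=
      sp_hi (by omega) (by omega) (by omega)
    have s4 : swapProd (List.range' (2*h+p+2) h 2) (8*h+4-2*r-1) = 8*h+4-2*r-1 := sp_out (by omega)
    have s5 : swapProd (List.range' 2 h 2) (8*h+4-2*r-1) = 8*h+4-2*r-1-1 :=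
      sp_hi (by omega) (by omega) (by omega)
    rw [s1, s2, s3, s4, s5]
    all_goals omega
  · -- r = 4h+1 : 2 ↦ 1
    rw [hc, if_pos rfl,
        show f1 h p (4*h+1) = 2 from by simp only [f1]; split_ifs <;> first | exact ‹False›.elim | omega,
        show f1 h p 0 = 1 from by simp only [f1]; split_ifs <;> first | exact ‹False›.elim | omega]
    have s1 : swapProd (List.range' (2*h+p+3) h 2) 2 = 2 := sp_out (by omega)
    have s2 : Equiv.swap (2*h+1) (2*h+p+2) 2 = 2 :=
      Equiv.swap_apply_of_ne_of_ne (by omega) (by omega)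
    have s3 : swapProd (List.range' 1 h 2) 2 = 2-1 := sp_hi (by omega) (by omega) (by omega)
    have s4 : swapProd (List.range' (2*h+p+2) h 2) (2-1) = 2-1 := sp_out (by omega)
    have s5 : swapProd (List.range' 2 h 2) (2-1) = 2-1 := sp_out (by omega)
    rw [s1, s2, s3, s4, s5]
/- ===================== Case (ii): m = 2h, l' = 4h+2 ===================== -/

lemma weylS_apply_ii (h p l l' : ℕ) (hh : 1 ≤ h) (hl' : l' = 4*h + 2) (hl : l = l' + p) (x : ℕ) :
    weylS l l' x = swapProd (List.range' 2 h 2)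
      (swapProd (List.range' (2*h+p+2) (h+1) 2)
        (swapProd (List.range' 1 h 2)
          (Equiv.swap (2*h+1) (2*h+p+2)
            (swapProd (List.range' (2*h+p+3) h 2) x)))) := by
  have e1 : (l' - 1)/2 = 2*h := by omega
  have e2 : l - l' = p := by omega
  have e3 : (2*h) % 2 = 0 := by omega
  have e4 : l' % 2 = 0 := by omega
  have e5 : (2*h)/2 = h := by omega
  simp only [weylS, e1, e2, e3, e4, e5, if_pos, if_true]
  norm_num

def f2c (h p r : ℕ) : ℕ :=
  if r ≤ h then 2*r + 1
  else if r ≤ 2*h+1 then 2*r + p + 1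
  else if r ≤ 3*h + 2 then 8*h + p + 6 - 2*r
  else 8*h + 6 - 2*r

def valII (h p : ℕ) : ℕ → ℕ := fun t => f2c h p (t % (4*h+3))

set_option maxHeartbeats 4000000 in
def cyc_ii (h p l l' : ℕ) (hh : 1 ≤ h) (hl' : l' = 4*h + 2) (hl : l = l' + p) :
    Cyc l (2*h) p (weylS l l') := by
  refine
  { N := 4*h+3, M := 2*h+1, lo := h, hi := 3*h+3,
    val := valII h p,
    hm2 := by omega, hNp := by omega, hN1 := by omega, hN2 := by omega,
    h1lo := by omega, hloM := by omega, hMhi := by omega, hhiN := by omega,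
    hLsize := by omega,
    hper := by intro t; simp only [valII, Nat.add_mod_right],
    hup := by
      intro t1 t2 hlt hle
      simp only [valII]
      rw [Nat.mod_eq_of_lt (by omega), Nat.mod_eq_of_lt (by omega)]
      simp only [f2c]; split_ifs <;> first | exact ‹False›.elim | omega,
    hdown := by
      intro t1 t2 h1 h2 h3
      simp only [valII]
      by_cases ht2 : t2 = 4*h+3
      · subst ht2
        rw [Nat.mod_self, Nat.mod_eq_of_lt (by omega)]
        simp only [f2c]; split_ifs <;> first | exact ‹False›.elim | omega
      · rw [Nat.mod_eq_of_lt (by omega), Nat.mod_eq_of_lt (by omega)]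
        simp only [f2c]; split_ifs <;> first | exact ‹False›.elim | omega,
    hL := by
      intro t ht
      simp only [valII]
      rw [Nat.mod_eq_of_lt ht]
      simp only [f2c]; split_ifs <;> first | exact ‹False›.elim | omega,
    hrange := by
      intro t ht
      simp only [valII]
      rw [Nat.mod_eq_of_lt ht]
      simp only [f2c]; split_ifs <;> first | exact ‹False›.elim | omega,
    hsurj := by
      intro x h1 h2 h3
      simp only [valII]
      by_cases hxL : x ≤ 2*h+1
      · rcases Nat.even_or_odd x with ⟨u, hu⟩ | ⟨u, hu⟩
        · refine ⟨4*h+3-u, by omega, ?_⟩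
          rw [Nat.mod_eq_of_lt (by omega)]
          simp only [f2c]; split_ifs <;> first | exact ‹False›.elim | omega
        · refine ⟨u, by omega, ?_⟩
          rw [Nat.mod_eq_of_lt (by omega)]
          simp only [f2c]; split_ifs <;> first | exact ‹False›.elim | omega
      · rcases Nat.even_or_odd (x - p) with ⟨u, hu⟩ | ⟨u, hu⟩
        · -- x - p even : descending R part : x = 8h+p+6-2r, r = (8h+p+6-x)/2 = 4h+3-u
          refine ⟨4*h+3-u, by omega, ?_⟩
          rw [Nat.mod_eq_of_lt (by omega)]
          simp only [f2c]; split_ifs <;> first | exact ‹False›.elim | omega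
        · refine ⟨u, by omega, ?_⟩
          rw [Nat.mod_eq_of_lt (by omega)]
          simp only [f2c]; split_ifs <;> first | exact ‹False›.elim | omega,
    hfix := by
      intro x hx
      rw [weylS_apply_ii h p l l' hh hl' hl]
      have s1 : swapProd (List.range' (2*h+p+3) h 2) x = x := sp_out (by omega)
      have s2 : Equiv.swap (2*h+1) (2*h+p+2) x = x :=
        Equiv.swap_apply_of_ne_of_ne (by omega) (by omega)
      have s3 : swapProd (List.range' 1 h 2) x = x := sp_out (by omega)
      have s4 : swapProd (List.range' (2*h+p+2) (h+1) 2) x = x := sp_out (by omega)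
      have s5 : swapProd (List.range' 2 h 2) x = x := sp_out (by omega)
      rw [s1, s2, s3, s4, s5],
    hLmax := by
      simp only [valII]
      rw [Nat.mod_eq_of_lt (by omega)]
      simp only [f2c]; split_ifs <;> first | exact ‹False›.elim | omega,
    hRmin := by
      simp only [valII]
      rw [Nat.mod_eq_of_lt (by omega)]
      simp only [f2c]; split_ifs <;> first | exact ‹False›.elim | omega,
    hs := ?_ }
  intro t
  simp only [valII]
  set r := t % (4*h+3) with hrdef
  have hr : r < 4*h+3 := Nat.mod_lt _ (by omega)
  have hr1 : (t+1) % (4*h+3) = if r = 4*h+2 then 0 else r + 1 := by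
    rw [← Nat.mod_add_mod, ← hrdef]
    split_ifs with he
    · rw [he, show 4*h+2+1 = 4*h+3 by omega, Nat.mod_self]
    · exact Nat.mod_eq_of_lt (by omega)
  rw [hr1, weylS_apply_ii h p l l' hh hl' hl]
  clear hr1
  clear_value r
  clear hrdef
  rcases (by omega :
      r < h ∨ r = h ∨ (h+1 ≤ r ∧ r ≤ 2*h) ∨ r = 2*h+1 ∨
      (2*h+2 ≤ r ∧ r ≤ 3*h+1) ∨ r = 3*h+2 ∨ (3*h+3 ≤ r ∧ r ≤ 4*h+1) ∨ r = 4*h+2)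
    with hc|hc|hc|hc|hc|hc|hc|hc
  · -- r < h : 2r+1 ↦ 2r+3
    rw [if_neg (by omega),
        show f2c h p r = 2*r+1 from by simp only [f2c]; split_ifs <;> first | exact ‹False›.elim | omega,
        show f2c h p (r+1) = 2*r+3 from by simp only [f2c]; split_ifs <;> first | exact ‹False›.elim | omega]
    have s1 : swapProd (List.range' (2*h+p+3) h 2) (2*r+1) = 2*r+1 := sp_out (by omega)
    have s2 : Equiv.swap (2*h+1) (2*h+p+2) (2*r+1) = 2*r+1 :=
      Equiv.swap_apply_of_ne_of_ne (by omega) (by omega)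
    have s3 : swapProd (List.range' 1 h 2) (2*r+1) = 2*r+1+1 := sp_lo (by omega) (by omega) (by omega)
    have s4 : swapProd (List.range' (2*h+p+2) (h+1) 2) (2*r+1+1) = 2*r+1+1 := sp_out (by omega)
    have s5 : swapProd (List.range' 2 h 2) (2*r+1+1) = 2*r+1+1+1 := sp_lo (by omega) (by omega) (by omega)
    rw [s1, s2, s3, s4, s5]
    all_goals omega
  · -- r = h : 2h+1 ↦ 2h+p+3
    rw [hc, if_neg (by omega),
        show f2c h p h = 2*h+1 from by simp only [f2c]; split_ifs <;> first | exact ‹False›.elim | omega,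
        show f2c h p (h+1) = 2*h+p+3 from by simp only [f2c]; split_ifs <;> first | exact ‹False›.elim | omega]
    have s1 : swapProd (List.range' (2*h+p+3) h 2) (2*h+1) = 2*h+1 := sp_out (by omega)
    have s2 : Equiv.swap (2*h+1) (2*h+p+2) (2*h+1) = 2*h+p+2 := Equiv.swap_apply_left _ _
    have s3 : swapProd (List.range' 1 h 2) (2*h+p+2) = 2*h+p+2 := sp_out (by omega)
    have s4 : swapProd (List.range' (2*h+p+2) (h+1) 2) (2*h+p+2) = 2*h+p+2+1 :=
      sp_lo (by omega) (by omega) (by omega)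
    have s5 : swapProd (List.range' 2 h 2) (2*h+p+2+1) = 2*h+p+2+1 := sp_out (by omega)
    rw [s1, s2, s3, s4, s5]
    all_goals omega
  · -- h+1 ≤ r ≤ 2h : 2r+p+1 ↦ 2r+p+3
    rw [if_neg (by omega),
        show f2c h p r = 2*r+p+1 from by simp only [f2c]; split_ifs <;> first | exact ‹False›.elim | omega,
        show f2c h p (r+1) = 2*r+p+3 from by simp only [f2c]; split_ifs <;> first | exact ‹False›.elim | omega]
    have s1 : swapProd (List.range' (2*h+p+3) h 2) (2*r+p+1) = 2*r+p+1+1 :=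
      sp_lo (by omega) (by omega) (by omega)
    have s2 : Equiv.swap (2*h+1) (2*h+p+2) (2*r+p+1+1) = 2*r+p+1+1 :=
      Equiv.swap_apply_of_ne_of_ne (by omega) (by omega)
    have s3 : swapProd (List.range' 1 h 2) (2*r+p+1+1) = 2*r+p+1+1 := sp_out (by omega)
    have s4 : swapProd (List.range' (2*h+p+2) (h+1) 2) (2*r+p+1+1) = 2*r+p+1+1+1 :=
      sp_lo (by omega) (by omega) (by omega)
    have s5 : swapProd (List.range' 2 h 2) (2*r+p+1+1+1) = 2*r+p+1+1+1 := sp_out (by omega)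
    rw [s1, s2, s3, s4, s5]
    all_goals omega
  · -- r = 2h+1 (peak) : 4h+p+3 ↦ 4h+p+2
    rw [hc, if_neg (by omega),
        show f2c h p (2*h+1) = 4*h+p+3 from by simp only [f2c]; split_ifs <;> first | exact ‹False›.elim | omega,
        show f2c h p (2*h+1+1) = 4*h+p+2 from by simp only [f2c]; split_ifs <;> first | exact ‹False›.elim | omega]
    have s1 : swapProd (List.range' (2*h+p+3) h 2) (4*h+p+3) = 4*h+p+3 := sp_out (by omega)
    have s2 : Equiv.swap (2*h+1) (2*h+p+2) (4*h+p+3) = 4*h+p+3 :=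
      Equiv.swap_apply_of_ne_of_ne (by omega) (by omega)
    have s3 : swapProd (List.range' 1 h 2) (4*h+p+3) = 4*h+p+3 := sp_out (by omega)
    have s4 : swapProd (List.range' (2*h+p+2) (h+1) 2) (4*h+p+3) = 4*h+p+3-1 :=
      sp_hi (by omega) (by omega) (by omega)
    have s5 : swapProd (List.range' 2 h 2) (4*h+p+3-1) = 4*h+p+3-1 := sp_out (by omega)
    rw [s1, s2, s3, s4, s5]
    all_goals omega
  · -- 2h+2 ≤ r ≤ 3h+1 : 8h+p+6-2r ↦ 8h+p+4-2r
    rw [if_neg (by omega),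
        show f2c h p r = 8*h+p+6-2*r from by simp only [f2c]; split_ifs <;> first | exact ‹False›.elim | omega,
        show f2c h p (r+1) = 8*h+p+4-2*r from by simp only [f2c]; split_ifs <;> first | exact ‹False›.elim | omega]
    have s1 : swapProd (List.range' (2*h+p+3) h 2) (8*h+p+6-2*r) = 8*h+p+6-2*r-1 :=
      sp_hi (by omega) (by omega) (by omega)
    have s2 : Equiv.swap (2*h+1) (2*h+p+2) (8*h+p+6-2*r-1) = 8*h+p+6-2*r-1 :=
      Equiv.swap_apply_of_ne_of_ne (by omega) (by omega)
    have s3 : swapProd (List.range' 1 h 2) (8*h+p+6-2*r-1) = 8*h+p+6-2*r-1 := sp_out (by omega)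
    have s4 : swapProd (List.range' (2*h+p+2) (h+1) 2) (8*h+p+6-2*r-1) = 8*h+p+6-2*r-1-1 :=
      sp_hi (by omega) (by omega) (by omega)
    have s5 : swapProd (List.range' 2 h 2) (8*h+p+6-2*r-1-1) = 8*h+p+6-2*r-1-1 := sp_out (by omega)
    rw [s1, s2, s3, s4, s5]
    all_goals omega
  · -- r = 3h+2 : 2h+p+2 ↦ 2h
    rw [hc, if_neg (by omega),
        show f2c h p (3*h+2) = 2*h+p+2 from by simp only [f2c]; split_ifs <;> first | exact ‹False›.elim | omega,
        show f2c h p (3*h+2+1) = 2*h from by simp only [f2c]; split_ifs <;> first | exact ‹False›.elim | omega]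
    have s1 : swapProd (List.range' (2*h+p+3) h 2) (2*h+p+2) = 2*h+p+2 := sp_out (by omega)
    have s2 : Equiv.swap (2*h+1) (2*h+p+2) (2*h+p+2) = 2*h+1 := Equiv.swap_apply_right _ _
    have s3 : swapProd (List.range' 1 h 2) (2*h+1) = 2*h+1 := sp_out (by omega)
    have s4 : swapProd (List.range' (2*h+p+2) (h+1) 2) (2*h+1) = 2*h+1 := sp_out (by omega)
    have s5 : swapProd (List.range' 2 h 2) (2*h+1) = 2*h+1-1 :=
      sp_hi (by omega) (by omega) (by omega)
    rw [s1, s2, s3, s4, s5]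
    all_goals omega
  · -- 3h+3 ≤ r ≤ 4h+1 : 8h+6-2r ↦ 8h+4-2r
    rw [if_neg (by omega),
        show f2c h p r = 8*h+6-2*r from by simp only [f2c]; split_ifs <;> first | exact ‹False›.elim | omega,
        show f2c h p (r+1) = 8*h+4-2*r from by simp only [f2c]; split_ifs <;> first | exact ‹False›.elim | omega]
    have s1 : swapProd (List.range' (2*h+p+3) h 2) (8*h+6-2*r) = 8*h+6-2*r := sp_out (by omega)
    have s2 : Equiv.swap (2*h+1) (2*h+p+2) (8*h+6-2*r) = 8*h+6-2*r :=
      Equiv.swap_apply_of_ne_of_ne (by omega) (by omega)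
    have s3 : swapProd (List.range' 1 h 2) (8*h+6-2*r) = 8*h+6-2*r-1 :=
      sp_hi (by omega) (by omega) (by omega)
    have s4 : swapProd (List.range' (2*h+p+2) (h+1) 2) (8*h+6-2*r-1) = 8*h+6-2*r-1 := sp_out (by omega)
    have s5 : swapProd (List.range' 2 h 2) (8*h+6-2*r-1) = 8*h+6-2*r-1-1 :=
      sp_hi (by omega) (by omega) (by omega)
    rw [s1, s2, s3, s4, s5]
    all_goals omega
  · -- r = 4h+2 : 2 ↦ 1
    rw [hc, if_pos rfl,
        show f2c h p (4*h+2) = 2 from by simp only [f2c]; split_ifs <;> first | exact ‹False›.elim | omega,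
        show f2c h p 0 = 1 from by simp only [f2c]; split_ifs <;> first | exact ‹False›.elim | omega]
    have s1 : swapProd (List.range' (2*h+p+3) h 2) 2 = 2 := sp_out (by omega)
    have s2 : Equiv.swap (2*h+1) (2*h+p+2) 2 = 2 :=
      Equiv.swap_apply_of_ne_of_ne (by omega) (by omega)
    have s3 : swapProd (List.range' 1 h 2) 2 = 2-1 := sp_hi (by omega) (by omega) (by omega)
    have s4 : swapProd (List.range' (2*h+p+2) (h+1) 2) (2-1) = 2-1 := sp_out (by omega)
    have s5 : swapProd (List.range' 2 h 2) (2-1) = 2-1 := sp_out (by omega)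
    rw [s1, s2, s3, s4, s5]
/- ===================== Case (iii): m = 2h+1, l' = 4h+3 ===================== -/

lemma weylS_apply_iii (h p l l' : ℕ) (hh : 1 ≤ h) (hl' : l' = 4*h + 3) (hl : l = l' + p) (x : ℕ) :
    weylS l l' x = swapProd (List.range' 1 (h+1) 2)
      (swapProd (List.range' (2*h+p+3) (h+1) 2)
        (swapProd (List.range' 2 h 2)
          (Equiv.swap (2*h+2) (2*h+p+3)
            (swapProd (List.range' (2*h+p+4) h 2) x)))) := by
  have e1 : (l' - 1)/2 = 2*h+1 := by omega
  have e2 : l - l' = p := by omega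
  have e3 : (2*h+1) % 2 = 1 := by omega
  have e4 : l' % 2 = 1 := by omega
  have e5 : (2*h+1+1)/2 = h+1 := by omega
  have e6 : (2*h+1-1)/2 = h := by omega
  have e7 : 2*h+1+1 = 2*h+2 := by omega
  have e8 : 2*h+1+p+2 = 2*h+p+3 := by omega
  have e9 : 2*h+1+p+3 = 2*h+p+4 := by omega
  simp only [weylS, e1, e2, e3, e4, e5, e6, e7, e8, e9]
  norm_num

def f3c (h p r : ℕ) : ℕ :=
  if r = 0 then 1
  else if r ≤ h+1 then 2*r
  else if r ≤ 2*h+1 then 2*r + p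
  else if r = 2*h+2 then 4*h + p + 4
  else if r ≤ 3*h+3 then 8*h + p + 9 - 2*r
  else 8*h + 9 - 2*r

def valIII (h p : ℕ) : ℕ → ℕ := fun t => f3c h p (t % (4*h+4))

set_option maxHeartbeats 4000000 in
def cyc_iii (h p l l' : ℕ) (hh : 1 ≤ h) (hl' : l' = 4*h + 3) (hl : l = l' + p) :
    Cyc l (2*h+1) p (weylS l l') := by
  refine
  { N := 4*h+4, M := 2*h+2, lo := h+1, hi := 3*h+4,
    val := valIII h p,
    hm2 := by omega, hNp := by omega, hN1 := by omega, hN2 := by omega,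
    h1lo := by omega, hloM := by omega, hMhi := by omega, hhiN := by omega,
    hLsize := by omega,
    hper := by intro t; simp only [valIII, Nat.add_mod_right],
    hup := by
      intro t1 t2 hlt hle
      simp only [valIII]
      rw [Nat.mod_eq_of_lt (by omega), Nat.mod_eq_of_lt (by omega)]
      simp only [f3c]; split_ifs <;> first | exact ‹False›.elim | omega,
    hdown := by
      intro t1 t2 h1 h2 h3
      simp only [valIII]
      by_cases ht2 : t2 = 4*h+4
      · subst ht2
        rw [Nat.mod_self, Nat.mod_eq_of_lt (by omega)]
        simp only [f3c]; split_ifs <;> first | exact ‹False›.elim | omega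
      · rw [Nat.mod_eq_of_lt (by omega), Nat.mod_eq_of_lt (by omega)]
        simp only [f3c]; split_ifs <;> first | exact ‹False›.elim | omega,
    hL := by
      intro t ht
      simp only [valIII]
      rw [Nat.mod_eq_of_lt ht]
      simp only [f3c]; split_ifs <;> first | exact ‹False›.elim | omega,
    hrange := by
      intro t ht
      simp only [valIII]
      rw [Nat.mod_eq_of_lt ht]
      simp only [f3c]; split_ifs <;> first | exact ‹False›.elim | omega,
    hsurj := by
      intro x h1 h2 h3
      simp only [valIII]
      by_cases hxL : x ≤ 2*h+2
      · rcases Nat.even_or_odd x with ⟨u, hu⟩ | ⟨u, hu⟩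
        · -- even x in L : ascending part, x = 2r, r = u ∈ [1, h+1]
          refine ⟨u, by omega, ?_⟩
          rw [Nat.mod_eq_of_lt (by omega)]
          simp only [f3c]; split_ifs <;> first | exact ‹False›.elim | omega
        · -- odd x in L : x = 1 ↦ r = 0 ; else descending, x = 8h+9-2r, r = 4h+4-u
          by_cases hx1 : x = 1
          · refine ⟨0, by omega, ?_⟩
            rw [Nat.mod_eq_of_lt (by omega)]
            simp only [f3c]; split_ifs <;> first | exact ‹False›.elim | omega
          · refine ⟨4*h+4-u, by omega, ?_⟩
            rw [Nat.mod_eq_of_lt (by omega)]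
            simp only [f3c]; split_ifs <;> first | exact ‹False›.elim | omega
      · rcases Nat.even_or_odd (x - p) with ⟨u, hu⟩ | ⟨u, hu⟩
        · -- x-p even : ascending R (x = 2r+p) or peak
          by_cases hpk : x = 4*h+p+4
          · refine ⟨2*h+2, by omega, ?_⟩
            rw [Nat.mod_eq_of_lt (by omega)]
            simp only [f3c]; split_ifs <;> first | exact ‹False›.elim | omega
          · refine ⟨u, by omega, ?_⟩
            rw [Nat.mod_eq_of_lt (by omega)]
            simp only [f3c]; split_ifs <;> first | exact ‹False›.elim | omega
        · -- x-p odd : descending R : x = 8h+p+9-2r, x-p = 2u+1, r = 4h+4-u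
          refine ⟨4*h+4-u, by omega, ?_⟩
          rw [Nat.mod_eq_of_lt (by omega)]
          simp only [f3c]; split_ifs <;> first | exact ‹False›.elim | omega,
    hfix := by
      intro x hx
      rw [weylS_apply_iii h p l l' hh hl' hl]
      have s1 : swapProd (List.range' (2*h+p+4) h 2) x = x := sp_out (by omega)
      have s2 : Equiv.swap (2*h+2) (2*h+p+3) x = x :=
        Equiv.swap_apply_of_ne_of_ne (by omega) (by omega)
      have s3 : swapProd (List.range' 2 h 2) x = x := sp_out (by omega)
      have s4 : swapProd (List.range' (2*h+p+3) (h+1) 2) x = x := sp_out (by omega)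
      have s5 : swapProd (List.range' 1 (h+1) 2) x = x := sp_out (by omega)
      rw [s1, s2, s3, s4, s5],
    hLmax := by
      simp only [valIII]
      rw [Nat.mod_eq_of_lt (by omega)]
      simp only [f3c]; split_ifs <;> first | exact ‹False›.elim | omega,
    hRmin := by
      simp only [valIII]
      rw [Nat.mod_eq_of_lt (by omega)]
      simp only [f3c]; split_ifs <;> first | exact ‹False›.elim | omega,
    hs := ?_ }
  intro t
  simp only [valIII]
  set r := t % (4*h+4) with hrdef
  have hr : r < 4*h+4 := Nat.mod_lt _ (by omega)
  have hr1 : (t+1) % (4*h+4) = if r = 4*h+3 then 0 else r + 1 := by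
    rw [← Nat.mod_add_mod, ← hrdef]
    split_ifs with he
    · rw [he, show 4*h+3+1 = 4*h+4 by omega, Nat.mod_self]
    · exact Nat.mod_eq_of_lt (by omega)
  rw [hr1, weylS_apply_iii h p l l' hh hl' hl]
  clear hr1
  clear_value r
  clear hrdef
  rcases (by omega :
      r = 0 ∨ (1 ≤ r ∧ r ≤ h) ∨ r = h+1 ∨ (h+2 ≤ r ∧ r ≤ 2*h) ∨ r = 2*h+1 ∨ r = 2*h+2 ∨
      (2*h+3 ≤ r ∧ r ≤ 3*h+2) ∨ r = 3*h+3 ∨ (3*h+4 ≤ r ∧ r ≤ 4*h+2) ∨ r = 4*h+3)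
    with hc|hc|hc|hc|hc|hc|hc|hc|hc|hc
  · -- r = 0 : 1 ↦ 2
    rw [hc, if_neg (by omega),
        show f3c h p 0 = 1 from by simp only [f3c]; split_ifs <;> first | exact ‹False›.elim | omega,
        show f3c h p (0+1) = 2 from by simp only [f3c]; split_ifs <;> first | exact ‹False›.elim | omega]
    have s1 : swapProd (List.range' (2*h+p+4) h 2) 1 = 1 := sp_out (by omega)
    have s2 : Equiv.swap (2*h+2) (2*h+p+3) 1 = 1 :=
      Equiv.swap_apply_of_ne_of_ne (by omega) (by omega)
    have s3 : swapProd (List.range' 2 h 2) 1 = 1 := sp_out (by omega)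
    have s4 : swapProd (List.range' (2*h+p+3) (h+1) 2) 1 = 1 := sp_out (by omega)
    have s5 : swapProd (List.range' 1 (h+1) 2) 1 = 1+1 := sp_lo (by omega) (by omega) (by omega)
    rw [s1, s2, s3, s4, s5]
  · -- 1 ≤ r ≤ h : 2r ↦ 2r+2
    rw [if_neg (by omega),
        show f3c h p r = 2*r from by simp only [f3c]; split_ifs <;> first | exact ‹False›.elim | omega,
        show f3c h p (r+1) = 2*r+2 from by simp only [f3c]; split_ifs <;> first | exact ‹False›.elim | omega]
    have s1 : swapProd (List.range' (2*h+p+4) h 2) (2*r) = 2*r := sp_out (by omega)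
    have s2 : Equiv.swap (2*h+2) (2*h+p+3) (2*r) = 2*r :=
      Equiv.swap_apply_of_ne_of_ne (by omega) (by omega)
    have s3 : swapProd (List.range' 2 h 2) (2*r) = 2*r+1 := sp_lo (by omega) (by omega) (by omega)
    have s4 : swapProd (List.range' (2*h+p+3) (h+1) 2) (2*r+1) = 2*r+1 := sp_out (by omega)
    have s5 : swapProd (List.range' 1 (h+1) 2) (2*r+1) = 2*r+1+1 := sp_lo (by omega) (by omega) (by omega)
    rw [s1, s2, s3, s4, s5]
    all_goals omega
  · -- r = h+1 : 2h+2 ↦ 2h+p+4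
    rw [hc, if_neg (by omega),
        show f3c h p (h+1) = 2*h+2 from by simp only [f3c]; split_ifs <;> first | exact ‹False›.elim | omega,
        show f3c h p (h+1+1) = 2*h+p+4 from by simp only [f3c]; split_ifs <;> first | exact ‹False›.elim | omega]
    have s1 : swapProd (List.range' (2*h+p+4) h 2) (2*h+2) = 2*h+2 := sp_out (by omega)
    have s2 : Equiv.swap (2*h+2) (2*h+p+3) (2*h+2) = 2*h+p+3 := Equiv.swap_apply_left _ _
    have s3 : swapProd (List.range' 2 h 2) (2*h+p+3) = 2*h+p+3 := sp_out (by omega)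
    have s4 : swapProd (List.range' (2*h+p+3) (h+1) 2) (2*h+p+3) = 2*h+p+3+1 :=
      sp_lo (by omega) (by omega) (by omega)
    have s5 : swapProd (List.range' 1 (h+1) 2) (2*h+p+3+1) = 2*h+p+3+1 := sp_out (by omega)
    rw [s1, s2, s3, s4, s5]
    all_goals omega
  · -- h+2 ≤ r ≤ 2h : 2r+p ↦ 2r+p+2
    rw [if_neg (by omega),
        show f3c h p r = 2*r+p from by simp only [f3c]; split_ifs <;> first | exact ‹False›.elim | omega,
        show f3c h p (r+1) = 2*r+p+2 from by simp only [f3c]; split_ifs <;> first | exact ‹False›.elim | omega]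
    have s1 : swapProd (List.range' (2*h+p+4) h 2) (2*r+p) = 2*r+p+1 :=
      sp_lo (by omega) (by omega) (by omega)
    have s2 : Equiv.swap (2*h+2) (2*h+p+3) (2*r+p+1) = 2*r+p+1 :=
      Equiv.swap_apply_of_ne_of_ne (by omega) (by omega)
    have s3 : swapProd (List.range' 2 h 2) (2*r+p+1) = 2*r+p+1 := sp_out (by omega)
    have s4 : swapProd (List.range' (2*h+p+3) (h+1) 2) (2*r+p+1) = 2*r+p+1+1 :=
      sp_lo (by omega) (by omega) (by omega)
    have s5 : swapProd (List.range' 1 (h+1) 2) (2*r+p+1+1) = 2*r+p+1+1 := sp_out (by omega)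
    rw [s1, s2, s3, s4, s5]
    all_goals omega
  · -- r = 2h+1 : 4h+p+2 ↦ 4h+p+4
    rw [hc, if_neg (by omega),
        show f3c h p (2*h+1) = 4*h+p+2 from by simp only [f3c]; split_ifs <;> first | exact ‹False›.elim | omega,
        show f3c h p (2*h+1+1) = 4*h+p+4 from by simp only [f3c]; split_ifs <;> first | exact ‹False›.elim | omega]
    have s1 : swapProd (List.range' (2*h+p+4) h 2) (4*h+p+2) = 4*h+p+2+1 :=
      sp_lo (by omega) (by omega) (by omega)
    have s2 : Equiv.swap (2*h+2) (2*h+p+3) (4*h+p+2+1) = 4*h+p+2+1 :=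
      Equiv.swap_apply_of_ne_of_ne (by omega) (by omega)
    have s3 : swapProd (List.range' 2 h 2) (4*h+p+2+1) = 4*h+p+2+1 := sp_out (by omega)
    have s4 : swapProd (List.range' (2*h+p+3) (h+1) 2) (4*h+p+2+1) = 4*h+p+2+1+1 :=
      sp_lo (by omega) (by omega) (by omega)
    have s5 : swapProd (List.range' 1 (h+1) 2) (4*h+p+2+1+1) = 4*h+p+2+1+1 := sp_out (by omega)
    rw [s1, s2, s3, s4, s5]
    all_goals omega
  · -- r = 2h+2 : 4h+p+4 ↦ 4h+p+3
    rw [hc, if_neg (by omega),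
        show f3c h p (2*h+2) = 4*h+p+4 from by simp only [f3c]; split_ifs <;> first | exact ‹False›.elim | omega,
        show f3c h p (2*h+2+1) = 4*h+p+3 from by simp only [f3c]; split_ifs <;> first | exact ‹False›.elim | omega]
    have s1 : swapProd (List.range' (2*h+p+4) h 2) (4*h+p+4) = 4*h+p+4 := sp_out (by omega)
    have s2 : Equiv.swap (2*h+2) (2*h+p+3) (4*h+p+4) = 4*h+p+4 :=
      Equiv.swap_apply_of_ne_of_ne (by omega) (by omega)
    have s3 : swapProd (List.range' 2 h 2) (4*h+p+4) = 4*h+p+4 := sp_out (by omega)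
    have s4 : swapProd (List.range' (2*h+p+3) (h+1) 2) (4*h+p+4) = 4*h+p+4-1 :=
      sp_hi (by omega) (by omega) (by omega)
    have s5 : swapProd (List.range' 1 (h+1) 2) (4*h+p+4-1) = 4*h+p+4-1 := sp_out (by omega)
    rw [s1, s2, s3, s4, s5]
    all_goals omega
  · -- 2h+3 ≤ r ≤ 3h+2 : 8h+p+9-2r ↦ 8h+p+7-2r
    rw [if_neg (by omega),
        show f3c h p r = 8*h+p+9-2*r from by simp only [f3c]; split_ifs <;> first | exact ‹False›.elim | omega,
        show f3c h p (r+1) = 8*h+p+7-2*r from by simp only [f3c]; split_ifs <;> first | exact ‹False›.elim | omega]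
    have s1 : swapProd (List.range' (2*h+p+4) h 2) (8*h+p+9-2*r) = 8*h+p+9-2*r-1 :=
      sp_hi (by omega) (by omega) (by omega)
    have s2 : Equiv.swap (2*h+2) (2*h+p+3) (8*h+p+9-2*r-1) = 8*h+p+9-2*r-1 :=
      Equiv.swap_apply_of_ne_of_ne (by omega) (by omega)
    have s3 : swapProd (List.range' 2 h 2) (8*h+p+9-2*r-1) = 8*h+p+9-2*r-1 := sp_out (by omega)
    have s4 : swapProd (List.range' (2*h+p+3) (h+1) 2) (8*h+p+9-2*r-1) = 8*h+p+9-2*r-1-1 :=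
      sp_hi (by omega) (by omega) (by omega)
    have s5 : swapProd (List.range' 1 (h+1) 2) (8*h+p+9-2*r-1-1) = 8*h+p+9-2*r-1-1 := sp_out (by omega)
    rw [s1, s2, s3, s4, s5]
    all_goals omega
  · -- r = 3h+3 : 2h+p+3 ↦ 2h+1
    rw [hc, if_neg (by omega),
        show f3c h p (3*h+3) = 2*h+p+3 from by simp only [f3c]; split_ifs <;> first | exact ‹False›.elim | omega,
        show f3c h p (3*h+3+1) = 2*h+1 from by simp only [f3c]; split_ifs <;> first | exact ‹False›.elim | omega]
    have s1 : swapProd (List.range' (2*h+p+4) h 2) (2*h+p+3) = 2*h+p+3 := sp_out (by omega)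
    have s2 : Equiv.swap (2*h+2) (2*h+p+3) (2*h+p+3) = 2*h+2 := Equiv.swap_apply_right _ _
    have s3 : swapProd (List.range' 2 h 2) (2*h+2) = 2*h+2 := sp_out (by omega)
    have s4 : swapProd (List.range' (2*h+p+3) (h+1) 2) (2*h+2) = 2*h+2 := sp_out (by omega)
    have s5 : swapProd (List.range' 1 (h+1) 2) (2*h+2) = 2*h+2-1 :=
      sp_hi (by omega) (by omega) (by omega)
    rw [s1, s2, s3, s4, s5]
    all_goals omega
  · -- 3h+4 ≤ r ≤ 4h+2 : 8h+9-2r ↦ 8h+7-2r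
    rw [if_neg (by omega),
        show f3c h p r = 8*h+9-2*r from by simp only [f3c]; split_ifs <;> first | exact ‹False›.elim | omega,
        show f3c h p (r+1) = 8*h+7-2*r from by simp only [f3c]; split_ifs <;> first | exact ‹False›.elim | omega]
    have s1 : swapProd (List.range' (2*h+p+4) h 2) (8*h+9-2*r) = 8*h+9-2*r := sp_out (by omega)
    have s2 : Equiv.swap (2*h+2) (2*h+p+3) (8*h+9-2*r) = 8*h+9-2*r :=
      Equiv.swap_apply_of_ne_of_ne (by omega) (by omega)
    have s3 : swapProd (List.range' 2 h 2) (8*h+9-2*r) = 8*h+9-2*r-1 :=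
      sp_hi (by omega) (by omega) (by omega)
    have s4 : swapProd (List.range' (2*h+p+3) (h+1) 2) (8*h+9-2*r-1) = 8*h+9-2*r-1 := sp_out (by omega)
    have s5 : swapProd (List.range' 1 (h+1) 2) (8*h+9-2*r-1) = 8*h+9-2*r-1-1 :=
      sp_hi (by omega) (by omega) (by omega)
    rw [s1, s2, s3, s4, s5]
    all_goals omega
  · -- r = 4h+3 : 3 ↦ 1
    rw [hc, if_pos rfl,
        show f3c h p (4*h+3) = 3 from by simp only [f3c]; split_ifs <;> first | exact ‹False›.elim | omega,
        show f3c h p 0 = 1 from by simp only [f3c]; split_ifs <;> first | exact ‹False›.elim | omega]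
    have s1 : swapProd (List.range' (2*h+p+4) h 2) 3 = 3 := sp_out (by omega)
    have s2 : Equiv.swap (2*h+2) (2*h+p+3) 3 = 3 :=
      Equiv.swap_apply_of_ne_of_ne (by omega) (by omega)
    have s3 : swapProd (List.range' 2 h 2) 3 = 3-1 := sp_hi (by omega) (by omega) (by omega)
    have s4 : swapProd (List.range' (2*h+p+3) (h+1) 2) (3-1) = 3-1 := sp_out (by omega)
    have s5 : swapProd (List.range' 1 (h+1) 2) (3-1) = 3-1-1 :=
      sp_hi (by omega) (by omega) (by omega)
    rw [s1, s2, s3, s4, s5]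
/- ===================== Case (iv): m = 2h+1, l' = 4h+4 ===================== -/

lemma weylS_apply_iv (h p l l' : ℕ) (hh : 1 ≤ h) (hl' : l' = 4*h + 4) (hl : l = l' + p) (x : ℕ) :
    weylS l l' x = swapProd (List.range' 1 (h+1) 2)
      (swapProd (List.range' (2*h+p+3) (h+1) 2)
        (swapProd (List.range' 2 h 2)
          (Equiv.swap (2*h+2) (2*h+p+3)
            (swapProd (List.range' (2*h+p+4) (h+1) 2) x)))) := by
  have e1 : (l' - 1)/2 = 2*h+1 := by omega
  have e2 : l - l' = p := by omega
  have e3 : (2*h+1) % 2 = 1 := by omega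
  have e4 : l' % 2 = 0 := by omega
  have e5 : (2*h+1+1)/2 = h+1 := by omega
  have e6 : (2*h+1-1)/2 = h := by omega
  have e7 : 2*h+1+1 = 2*h+2 := by omega
  have e8 : 2*h+1+p+2 = 2*h+p+3 := by omega
  have e9 : 2*h+1+p+3 = 2*h+p+4 := by omega
  simp only [weylS, e1, e2, e3, e4, e5, e6, e7, e8, e9]
  norm_num

def f4c (h p r : ℕ) : ℕ :=
  if r = 0 then 1
  else if r ≤ h+1 then 2*r
  else if r ≤ 2*h+1 then 2*r + p
  else if r = 2*h+2 then 4*h + p + 4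
  else if r = 2*h+3 then 4*h + p + 5
  else if r ≤ 3*h+4 then 8*h + p + 11 - 2*r
  else 8*h + 11 - 2*r

def valIV (h p : ℕ) : ℕ → ℕ := fun t => f4c h p (t % (4*h+5))

set_option maxHeartbeats 4000000 in
def cyc_iv (h p l l' : ℕ) (hh : 1 ≤ h) (hl' : l' = 4*h + 4) (hl : l = l' + p) :
    Cyc l (2*h+1) p (weylS l l') := by
  refine
  { N := 4*h+5, M := 2*h+3, lo := h+1, hi := 3*h+5,
    val := valIV h p,
    hm2 := by omega, hNp := by omega, hN1 := by omega, hN2 := by omega,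
    h1lo := by omega, hloM := by omega, hMhi := by omega, hhiN := by omega,
    hLsize := by omega,
    hper := by intro t; simp only [valIV, Nat.add_mod_right],
    hup := by
      intro t1 t2 hlt hle
      simp only [valIV]
      rw [Nat.mod_eq_of_lt (by omega), Nat.mod_eq_of_lt (by omega)]
      simp only [f4c]; split_ifs <;> first | exact ‹False›.elim | omega,
    hdown := by
      intro t1 t2 h1 h2 h3
      simp only [valIV]
      by_cases ht2 : t2 = 4*h+5
      · subst ht2
        rw [Nat.mod_self, Nat.mod_eq_of_lt (by omega)]
        simp only [f4c]; split_ifs <;> first | exact ‹False›.elim | omega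
      · rw [Nat.mod_eq_of_lt (by omega), Nat.mod_eq_of_lt (by omega)]
        simp only [f4c]; split_ifs <;> first | exact ‹False›.elim | omega,
    hL := by
      intro t ht
      simp only [valIV]
      rw [Nat.mod_eq_of_lt ht]
      simp only [f4c]; split_ifs <;> first | exact ‹False›.elim | omega,
    hrange := by
      intro t ht
      simp only [valIV]
      rw [Nat.mod_eq_of_lt ht]
      simp only [f4c]; split_ifs <;> first | exact ‹False›.elim | omega,
    hsurj := by
      intro x h1 h2 h3
      simp only [valIV]
      by_cases hxL : x ≤ 2*h+2
      · rcases Nat.even_or_odd x with ⟨u, hu⟩ | ⟨u, hu⟩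
        · refine ⟨u, by omega, ?_⟩
          rw [Nat.mod_eq_of_lt (by omega)]
          simp only [f4c]; split_ifs <;> first | exact ‹False›.elim | omega
        · by_cases hx1 : x = 1
          · refine ⟨0, by omega, ?_⟩
            rw [Nat.mod_eq_of_lt (by omega)]
            simp only [f4c]; split_ifs <;> first | exact ‹False›.elim | omega
          · refine ⟨4*h+5-u, by omega, ?_⟩
            rw [Nat.mod_eq_of_lt (by omega)]
            simp only [f4c]; split_ifs <;> first | exact ‹False›.elim | omega
      · rcases Nat.even_or_odd (x - p) with ⟨u, hu⟩ | ⟨u, hu⟩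
        · -- x-p even : ascending R, or peak 4h+p+4 at r = 2h+2
          by_cases hpk : x = 4*h+p+4
          · refine ⟨2*h+2, by omega, ?_⟩
            rw [Nat.mod_eq_of_lt (by omega)]
            simp only [f4c]; split_ifs <;> first | exact ‹False›.elim | omega
          · refine ⟨u, by omega, ?_⟩
            rw [Nat.mod_eq_of_lt (by omega)]
            simp only [f4c]; split_ifs <;> first | exact ‹False›.elim | omega
        · -- x-p odd : peak 4h+p+5 at r = 2h+3, or descending R : x = 8h+p+11-2r, r = 4h+5-u... 
          by_cases hpk : x = 4*h+p+5
          · refine ⟨2*h+3, by omega, ?_⟩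
            rw [Nat.mod_eq_of_lt (by omega)]
            simp only [f4c]; split_ifs <;> first | exact ‹False›.elim | omega
          · refine ⟨4*h+5-u, by omega, ?_⟩
            rw [Nat.mod_eq_of_lt (by omega)]
            simp only [f4c]; split_ifs <;> first | exact ‹False›.elim | omega,
    hfix := by
      intro x hx
      rw [weylS_apply_iv h p l l' hh hl' hl]
      have s1 : swapProd (List.range' (2*h+p+4) (h+1) 2) x = x := sp_out (by omega)
      have s2 : Equiv.swap (2*h+2) (2*h+p+3) x = x :=
        Equiv.swap_apply_of_ne_of_ne (by omega) (by omega)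
      have s3 : swapProd (List.range' 2 h 2) x = x := sp_out (by omega)
      have s4 : swapProd (List.range' (2*h+p+3) (h+1) 2) x = x := sp_out (by omega)
      have s5 : swapProd (List.range' 1 (h+1) 2) x = x := sp_out (by omega)
      rw [s1, s2, s3, s4, s5],
    hLmax := by
      simp only [valIV]
      rw [Nat.mod_eq_of_lt (by omega)]
      simp only [f4c]; split_ifs <;> first | exact ‹False›.elim | omega,
    hRmin := by
      simp only [valIV]
      rw [Nat.mod_eq_of_lt (by omega)]
      simp only [f4c]; split_ifs <;> first | exact ‹False›.elim | omega,
    hs := ?_ }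
  intro t
  simp only [valIV]
  set r := t % (4*h+5) with hrdef
  have hr : r < 4*h+5 := Nat.mod_lt _ (by omega)
  have hr1 : (t+1) % (4*h+5) = if r = 4*h+4 then 0 else r + 1 := by
    rw [← Nat.mod_add_mod, ← hrdef]
    split_ifs with he
    · rw [he, show 4*h+4+1 = 4*h+5 by omega, Nat.mod_self]
    · exact Nat.mod_eq_of_lt (by omega)
  rw [hr1, weylS_apply_iv h p l l' hh hl' hl]
  clear hr1
  clear_value r
  clear hrdef
  rcases (by omega :
      r = 0 ∨ (1 ≤ r ∧ r ≤ h) ∨ r = h+1 ∨ (h+2 ≤ r ∧ r ≤ 2*h) ∨ r = 2*h+1 ∨ r = 2*h+2 ∨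
      r = 2*h+3 ∨ (2*h+4 ≤ r ∧ r ≤ 3*h+3) ∨ r = 3*h+4 ∨ (3*h+5 ≤ r ∧ r ≤ 4*h+3) ∨ r = 4*h+4)
    with hc|hc|hc|hc|hc|hc|hc|hc|hc|hc|hc
  · -- r = 0 : 1 ↦ 2
    rw [hc, if_neg (by omega),
        show f4c h p 0 = 1 from by simp only [f4c]; split_ifs <;> first | exact ‹False›.elim | omega,
        show f4c h p (0+1) = 2 from by simp only [f4c]; split_ifs <;> first | exact ‹False›.elim | omega]
    have s1 : swapProd (List.range' (2*h+p+4) (h+1) 2) 1 = 1 := sp_out (by omega)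
    have s2 : Equiv.swap (2*h+2) (2*h+p+3) 1 = 1 :=
      Equiv.swap_apply_of_ne_of_ne (by omega) (by omega)
    have s3 : swapProd (List.range' 2 h 2) 1 = 1 := sp_out (by omega)
    have s4 : swapProd (List.range' (2*h+p+3) (h+1) 2) 1 = 1 := sp_out (by omega)
    have s5 : swapProd (List.range' 1 (h+1) 2) 1 = 1+1 := sp_lo (by omega) (by omega) (by omega)
    rw [s1, s2, s3, s4, s5]
  · -- 1 ≤ r ≤ h : 2r ↦ 2r+2
    rw [if_neg (by omega),
        show f4c h p r = 2*r from by simp only [f4c]; split_ifs <;> first | exact ‹False›.elim | omega,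
        show f4c h p (r+1) = 2*r+2 from by simp only [f4c]; split_ifs <;> first | exact ‹False›.elim | omega]
    have s1 : swapProd (List.range' (2*h+p+4) (h+1) 2) (2*r) = 2*r := sp_out (by omega)
    have s2 : Equiv.swap (2*h+2) (2*h+p+3) (2*r) = 2*r :=
      Equiv.swap_apply_of_ne_of_ne (by omega) (by omega)
    have s3 : swapProd (List.range' 2 h 2) (2*r) = 2*r+1 := sp_lo (by omega) (by omega) (by omega)
    have s4 : swapProd (List.range' (2*h+p+3) (h+1) 2) (2*r+1) = 2*r+1 := sp_out (by omega)
    have s5 : swapProd (List.range' 1 (h+1) 2) (2*r+1) = 2*r+1+1 := sp_lo (by omega) (by omega) (by omega)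
    rw [s1, s2, s3, s4, s5]
    all_goals omega
  · -- r = h+1 : 2h+2 ↦ 2h+p+4
    rw [hc, if_neg (by omega),
        show f4c h p (h+1) = 2*h+2 from by simp only [f4c]; split_ifs <;> first | exact ‹False›.elim | omega,
        show f4c h p (h+1+1) = 2*h+p+4 from by simp only [f4c]; split_ifs <;> first | exact ‹False›.elim | omega]
    have s1 : swapProd (List.range' (2*h+p+4) (h+1) 2) (2*h+2) = 2*h+2 := sp_out (by omega)
    have s2 : Equiv.swap (2*h+2) (2*h+p+3) (2*h+2) = 2*h+p+3 := Equiv.swap_apply_left _ _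
    have s3 : swapProd (List.range' 2 h 2) (2*h+p+3) = 2*h+p+3 := sp_out (by omega)
    have s4 : swapProd (List.range' (2*h+p+3) (h+1) 2) (2*h+p+3) = 2*h+p+3+1 :=
      sp_lo (by omega) (by omega) (by omega)
    have s5 : swapProd (List.range' 1 (h+1) 2) (2*h+p+3+1) = 2*h+p+3+1 := sp_out (by omega)
    rw [s1, s2, s3, s4, s5]
    all_goals omega
  · -- h+2 ≤ r ≤ 2h : 2r+p ↦ 2r+p+2
    rw [if_neg (by omega),
        show f4c h p r = 2*r+p from by simp only [f4c]; split_ifs <;> first | exact ‹False›.elim | omega,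
        show f4c h p (r+1) = 2*r+p+2 from by simp only [f4c]; split_ifs <;> first | exact ‹False›.elim | omega]
    have s1 : swapProd (List.range' (2*h+p+4) (h+1) 2) (2*r+p) = 2*r+p+1 :=
      sp_lo (by omega) (by omega) (by omega)
    have s2 : Equiv.swap (2*h+2) (2*h+p+3) (2*r+p+1) = 2*r+p+1 :=
      Equiv.swap_apply_of_ne_of_ne (by omega) (by omega)
    have s3 : swapProd (List.range' 2 h 2) (2*r+p+1) = 2*r+p+1 := sp_out (by omega)
    have s4 : swapProd (List.range' (2*h+p+3) (h+1) 2) (2*r+p+1) = 2*r+p+1+1 :=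
      sp_lo (by omega) (by omega) (by omega)
    have s5 : swapProd (List.range' 1 (h+1) 2) (2*r+p+1+1) = 2*r+p+1+1 := sp_out (by omega)
    rw [s1, s2, s3, s4, s5]
    all_goals omega
  · -- r = 2h+1 : 4h+p+2 ↦ 4h+p+4
    rw [hc, if_neg (by omega),
        show f4c h p (2*h+1) = 4*h+p+2 from by simp only [f4c]; split_ifs <;> first | exact ‹False›.elim | omega,
        show f4c h p (2*h+1+1) = 4*h+p+4 from by simp only [f4c]; split_ifs <;> first | exact ‹False›.elim | omega]
    have s1 : swapProd (List.range' (2*h+p+4) (h+1) 2) (4*h+p+2) = 4*h+p+2+1 :=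
      sp_lo (by omega) (by omega) (by omega)
    have s2 : Equiv.swap (2*h+2) (2*h+p+3) (4*h+p+2+1) = 4*h+p+2+1 :=
      Equiv.swap_apply_of_ne_of_ne (by omega) (by omega)
    have s3 : swapProd (List.range' 2 h 2) (4*h+p+2+1) = 4*h+p+2+1 := sp_out (by omega)
    have s4 : swapProd (List.range' (2*h+p+3) (h+1) 2) (4*h+p+2+1) = 4*h+p+2+1+1 :=
      sp_lo (by omega) (by omega) (by omega)
    have s5 : swapProd (List.range' 1 (h+1) 2) (4*h+p+2+1+1) = 4*h+p+2+1+1 := sp_out (by omega)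
    rw [s1, s2, s3, s4, s5]
    all_goals omega
  · -- r = 2h+2 : 4h+p+4 ↦ 4h+p+5
    rw [hc, if_neg (by omega),
        show f4c h p (2*h+2) = 4*h+p+4 from by simp only [f4c]; split_ifs <;> first | exact ‹False›.elim | omega,
        show f4c h p (2*h+2+1) = 4*h+p+5 from by simp only [f4c]; split_ifs <;> first | exact ‹False›.elim | omega]
    have s1 : swapProd (List.range' (2*h+p+4) (h+1) 2) (4*h+p+4) = 4*h+p+4+1 :=
      sp_lo (by omega) (by omega) (by omega)
    have s2 : Equiv.swap (2*h+2) (2*h+p+3) (4*h+p+4+1) = 4*h+p+4+1 :=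
      Equiv.swap_apply_of_ne_of_ne (by omega) (by omega)
    have s3 : swapProd (List.range' 2 h 2) (4*h+p+4+1) = 4*h+p+4+1 := sp_out (by omega)
    have s4 : swapProd (List.range' (2*h+p+3) (h+1) 2) (4*h+p+4+1) = 4*h+p+4+1 := sp_out (by omega)
    have s5 : swapProd (List.range' 1 (h+1) 2) (4*h+p+4+1) = 4*h+p+4+1 := sp_out (by omega)
    rw [s1, s2, s3, s4, s5]
    all_goals omega
  · -- r = 2h+3 (peak) : 4h+p+5 ↦ 4h+p+3
    rw [hc, if_neg (by omega),
        show f4c h p (2*h+3) = 4*h+p+5 from by simp only [f4c]; split_ifs <;> first | exact ‹False›.elim | omega,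
        show f4c h p (2*h+3+1) = 4*h+p+3 from by simp only [f4c]; split_ifs <;> first | exact ‹False›.elim | omega]
    have s1 : swapProd (List.range' (2*h+p+4) (h+1) 2) (4*h+p+5) = 4*h+p+5-1 :=
      sp_hi (by omega) (by omega) (by omega)
    have s2 : Equiv.swap (2*h+2) (2*h+p+3) (4*h+p+5-1) = 4*h+p+5-1 :=
      Equiv.swap_apply_of_ne_of_ne (by omega) (by omega)
    have s3 : swapProd (List.range' 2 h 2) (4*h+p+5-1) = 4*h+p+5-1 := sp_out (by omega)
    have s4 : swapProd (List.range' (2*h+p+3) (h+1) 2) (4*h+p+5-1) = 4*h+p+5-1-1 :=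
      sp_hi (by omega) (by omega) (by omega)
    have s5 : swapProd (List.range' 1 (h+1) 2) (4*h+p+5-1-1) = 4*h+p+5-1-1 := sp_out (by omega)
    rw [s1, s2, s3, s4, s5]
    all_goals omega
  · -- 2h+4 ≤ r ≤ 3h+3 : 8h+p+11-2r ↦ 8h+p+9-2r
    rw [if_neg (by omega),
        show f4c h p r = 8*h+p+11-2*r from by simp only [f4c]; split_ifs <;> first | exact ‹False›.elim | omega,
        show f4c h p (r+1) = 8*h+p+9-2*r from by simp only [f4c]; split_ifs <;> first | exact ‹False›.elim | omega]
    have s1 : swapProd (List.range' (2*h+p+4) (h+1) 2) (8*h+p+11-2*r) = 8*h+p+11-2*r-1 :=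
      sp_hi (by omega) (by omega) (by omega)
    have s2 : Equiv.swap (2*h+2) (2*h+p+3) (8*h+p+11-2*r-1) = 8*h+p+11-2*r-1 :=
      Equiv.swap_apply_of_ne_of_ne (by omega) (by omega)
    have s3 : swapProd (List.range' 2 h 2) (8*h+p+11-2*r-1) = 8*h+p+11-2*r-1 := sp_out (by omega)
    have s4 : swapProd (List.range' (2*h+p+3) (h+1) 2) (8*h+p+11-2*r-1) = 8*h+p+11-2*r-1-1 :=
      sp_hi (by omega) (by omega) (by omega)
    have s5 : swapProd (List.range' 1 (h+1) 2) (8*h+p+11-2*r-1-1) = 8*h+p+11-2*r-1-1 := sp_out (by omega)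
    rw [s1, s2, s3, s4, s5]
    all_goals omega
  · -- r = 3h+4 : 2h+p+3 ↦ 2h+1
    rw [hc, if_neg (by omega),
        show f4c h p (3*h+4) = 2*h+p+3 from by simp only [f4c]; split_ifs <;> first | exact ‹False›.elim | omega,
        show f4c h p (3*h+4+1) = 2*h+1 from by simp only [f4c]; split_ifs <;> first | exact ‹False›.elim | omega]
    have s1 : swapProd (List.range' (2*h+p+4) (h+1) 2) (2*h+p+3) = 2*h+p+3 := sp_out (by omega)
    have s2 : Equiv.swap (2*h+2) (2*h+p+3) (2*h+p+3) = 2*h+2 := Equiv.swap_apply_right _ _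
    have s3 : swapProd (List.range' 2 h 2) (2*h+2) = 2*h+2 := sp_out (by omega)
    have s4 : swapProd (List.range' (2*h+p+3) (h+1) 2) (2*h+2) = 2*h+2 := sp_out (by omega)
    have s5 : swapProd (List.range' 1 (h+1) 2) (2*h+2) = 2*h+2-1 :=
      sp_hi (by omega) (by omega) (by omega)
    rw [s1, s2, s3, s4, s5]
    all_goals omega
  · -- 3h+5 ≤ r ≤ 4h+3 : 8h+11-2r ↦ 8h+9-2r
    rw [if_neg (by omega),
        show f4c h p r = 8*h+11-2*r from by simp only [f4c]; split_ifs <;> first | exact ‹False›.elim | omega,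
        show f4c h p (r+1) = 8*h+9-2*r from by simp only [f4c]; split_ifs <;> first | exact ‹False›.elim | omega]
    have s1 : swapProd (List.range' (2*h+p+4) (h+1) 2) (8*h+11-2*r) = 8*h+11-2*r := sp_out (by omega)
    have s2 : Equiv.swap (2*h+2) (2*h+p+3) (8*h+11-2*r) = 8*h+11-2*r :=
      Equiv.swap_apply_of_ne_of_ne (by omega) (by omega)
    have s3 : swapProd (List.range' 2 h 2) (8*h+11-2*r) = 8*h+11-2*r-1 :=
      sp_hi (by omega) (by omega) (by omega)
    have s4 : swapProd (List.range' (2*h+p+3) (h+1) 2) (8*h+11-2*r-1) = 8*h+11-2*r-1 := sp_out (by omega)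
    have s5 : swapProd (List.range' 1 (h+1) 2) (8*h+11-2*r-1) = 8*h+11-2*r-1-1 :=
      sp_hi (by omega) (by omega) (by omega)
    rw [s1, s2, s3, s4, s5]
    all_goals omega
  · -- r = 4h+4 : 3 ↦ 1
    rw [hc, if_pos rfl,
        show f4c h p (4*h+4) = 3 from by simp only [f4c]; split_ifs <;> first | exact ‹False›.elim | omega,
        show f4c h p 0 = 1 from by simp only [f4c]; split_ifs <;> first | exact ‹False›.elim | omega]
    have s1 : swapProd (List.range' (2*h+p+4) (h+1) 2) 3 = 3 := sp_out (by omega)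
    have s2 : Equiv.swap (2*h+2) (2*h+p+3) 3 = 3 :=
      Equiv.swap_apply_of_ne_of_ne (by omega) (by omega)
    have s3 : swapProd (List.range' 2 h 2) 3 = 3-1 := sp_hi (by omega) (by omega) (by omega)
    have s4 : swapProd (List.range' (2*h+p+3) (h+1) 2) (3-1) = 3-1 := sp_out (by omega)
    have s5 : swapProd (List.range' 1 (h+1) 2) (3-1) = 3-1-1 :=
      sp_hi (by omega) (by omega) (by omega)
    rw [s1, s2, s3, s4, s5]

/-- for k ≥ 2 and κ ∈ Δ̄_K^k: (ii) if κ ∈ Δ^C ∪ Δ^R then P_κ = ∅;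
(iii) if κ ∈ (Δ̄_K)₊ \ Δ₃^O then P′_κ = ∅. -/
theorem stmt16 (l l' m p : ℕ) (h5 : 5 ≤ l') (hll : l' ≤ l)
    (hm : m = (l' - 1) / 2) (hp : p = l - l') :
    let s := weylS l l'
    ∀ k, 2 ≤ k → ∀ κ ∈ DeltaKk l s k,
      (κ ∈ DeltaC l s ∪ DeltaR l s → Pk l s k κ = ∅) ∧
        (κ ∈ DeltaKpos l s \ DeltaO3 l s m p → Pk' l s k κ = ∅) := by
  intro s
  have hl : l = l' + p := by omega
  rcases Nat.even_or_odd m with ⟨a, ha⟩ | ⟨a, ha⟩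
  · have ha1 : 1 ≤ a := by omega
    rcases Nat.even_or_odd l' with ⟨b, hb⟩ | ⟨b, hb⟩
    · rw [show m = 2*a by omega]
      exact Cyc.main_of_cyc (cyc_ii a p l l' ha1 (by omega) hl)
    · rw [show m = 2*a by omega]
      exact Cyc.main_of_cyc (cyc_i a p l l' ha1 (by omega) hl)
  · have ha1 : 1 ≤ a := by omega
    rcases Nat.even_or_odd l' with ⟨b, hb⟩ | ⟨b, hb⟩
    · rw [show m = 2*a+1 by omega]
      exact Cyc.main_of_cyc (cyc_iv a p l l' ha1 (by omega) hl)
    · rw [show m = 2*a+1 by omega]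
      exact Cyc.main_of_cyc (cyc_iii a p l l' ha1 (by omega) hl)
end DPW
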